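/- arXiv:1711.11529 — 5 statements merged into one kernel-verified Lean document; each statement's English description precedes it below -/
import Mathlib

section
/- Let n ≥ 2 and let A be a Young function; if n ≥ 3 assume that ∫^∞ (t/A(t))^{1/(n−2)} dt < ∞. If A satisfies the Δ₂-condition near infinity, then the Young function A_{n−1} also satisfies the Δ₂-condition near infinity. -/
open MeasureTheory Metric Set Filter ENNReal
open scoped Topology NNReal

noncomputable section

/-- Euclidean space `ℝⁿ`. -/
abbrev Euc (n : ℕ) : Type := EuclideanSpace ℝ (Fin n)

/-- A Young function: a convex function `A : [0,∞) → [0,∞]` with `A 0 = 0`,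
not constant on `(0,∞)`.  (Only values on `[0,∞)` are relevant.) -/
def IsYoung (A : ℝ → ℝ≥0∞) : Prop :=
  A 0 = 0 ∧
    (∀ ⦃x y : ℝ⦄, 0 ≤ x → 0 ≤ y → ∀ ⦃l : ℝ⦄, 0 ≤ l → l ≤ 1 →
      A (l * x + (1 - l) * y) ≤ ENNReal.ofReal l * A x + ENNReal.ofReal (1 - l) * A y) ∧
    ∃ x y : ℝ, 0 < x ∧ 0 < y ∧ A x ≠ A y

/-- The Young conjugate `Ã(t) = sup { s·t − A(s) : s ≥ 0 }`. -/
def youngConj (A : ℝ → ℝ≥0∞) (t : ℝ) : ℝ≥0∞ :=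
  ⨆ s : Ici (0 : ℝ), (ENNReal.ofReal ((s : ℝ) * t) - A s)

/-- The exponent `(n-1)/(n-2)`. -/
def youngExp (n : ℕ) : ℝ := ((n : ℝ) - 1) / ((n : ℝ) - 2)

/-- The Young function `A_{n-1}`; equal to `A` for `n = 2`, and for `n ≥ 3` the
Young conjugate of `t ↦ t^{(n-1)/(n-2)} ∫_t^∞ Ã(r) r^{-1-(n-1)/(n-2)} dr`. -/
def youngShifted (n : ℕ) (A : ℝ → ℝ≥0∞) : ℝ → ℝ≥0∞ :=
  if n = 2 then A
  else youngConj fun t =>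
    ENNReal.ofReal (t ^ youngExp n) *
      ∫⁻ r in Ioi t, youngConj A r / ENNReal.ofReal (r ^ (1 + youngExp n))

/-- The generalized right-continuous inverse of a Young function. -/
def youngInv (A : ℝ → ℝ≥0∞) (τ : ℝ≥0∞) : ℝ≥0∞ :=
  ⨅ (s : ℝ) (_ : 0 ≤ s ∧ τ < A s), ENNReal.ofReal s

/-- The condition `∫^∞ (t/A(t))^{1/(n-2)} dt < ∞`. -/
def TailCondition (n : ℕ) (A : ℝ → ℝ≥0∞) : Prop :=
  ∃ t₀ : ℝ, 0 < t₀ ∧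
    ∫⁻ t in Ioi t₀, (ENNReal.ofReal t / A t) ^ (1 / ((n : ℝ) - 2)) < ∞

/-- The Δ₂-condition near infinity. -/
def Delta2Infty (A : ℝ → ℝ≥0∞) : Prop :=
  ∃ C : ℝ, 2 < C ∧ ∃ t₀ : ℝ, 0 ≤ t₀ ∧ ∀ t : ℝ, t₀ ≤ t → A (2 * t) ≤ ENNReal.ofReal C * A t

/-- `g` is the weak gradient of `u` on the open set `Ω`, with `u` and `g`
locally integrable on `Ω`. -/
def IsWeakGradOn {n : ℕ} (Ω : Set (Euc n)) (u : Euc n → ℝ) (g : Euc n → Euc n) : Prop :=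
  LocallyIntegrableOn u Ω volume ∧ LocallyIntegrableOn (fun x => ‖g x‖) Ω volume ∧
    ∀ φ : Euc n → ℝ, ContDiff ℝ (⊤ : ℕ∞) φ → HasCompactSupport φ → tsupport φ ⊆ Ω →
      ∀ i : Fin n,
        ∫ x, u x * fderiv ℝ φ x (EuclideanSpace.single i 1) = - ∫ x, g x i * φ x

/-- Membership in the Orlicz space `L^A(s)` (finiteness of the Luxemburg norm). -/
def MemOrliczOn {n : ℕ} (A : ℝ → ℝ≥0∞) (s : Set (Euc n)) (f : Euc n → ℝ) : Prop :=
  ∃ lam : ℝ, 0 < lam ∧ ∫⁻ x in s, A (|f x| / lam) < ∞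

/-- `u ∈ W^{1,A}_loc(Ω)`, with weak gradient `g`. -/
def MemW1Aloc {n : ℕ} (A : ℝ → ℝ≥0∞) (Ω : Set (Euc n)) (u : Euc n → ℝ)
    (g : Euc n → Euc n) : Prop :=
  IsWeakGradOn Ω u g ∧
    ∀ Ω' : Set (Euc n), IsOpen Ω' → IsCompact (closure Ω') → closure Ω' ⊆ Ω →
      MemOrliczOn A Ω' u ∧ MemOrliczOn A Ω' (fun x => ‖g x‖)

/-- `v ∈ W^{1,1}_0(Ω')`: `v` has a weak gradient on `Ω'` and is approximable in the
`W^{1,1}(Ω')` norm by smooth functions compactly supported in `Ω'`. -/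
def MemW110 {n : ℕ} (Ω' : Set (Euc n)) (v : Euc n → ℝ) : Prop :=
  ∃ h : Euc n → Euc n, IsWeakGradOn Ω' v h ∧
    ∃ φ : ℕ → Euc n → ℝ,
      (∀ k, ContDiff ℝ (⊤ : ℕ∞) (φ k) ∧ HasCompactSupport (φ k) ∧ tsupport (φ k) ⊆ Ω') ∧
      Tendsto (fun k => ∫ x in Ω', (|φ k x - v x| + ‖gradient (φ k) x - h x‖))
        atTop (𝓝 0)

/-- `u` is weakly monotone on `Ω`. -/
def WeaklyMonotone {n : ℕ} (Ω : Set (Euc n)) (u : Euc n → ℝ) : Prop :=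
  ∀ Ω' : Set (Euc n), IsOpen Ω' → IsCompact (closure Ω') → closure Ω' ⊆ Ω →
    ∀ m M : ℝ, m ≤ M →
      MemW110 Ω' (fun x => max (u x - M) 0 - max (m - u x) 0) →
      ∀ᵐ x ∂volume.restrict Ω', m ≤ u x ∧ u x ≤ M

/-- The essential oscillation of `u` on a set `s`. -/
def essOsc {n : ℕ} (s : Set (Euc n)) (u : Euc n → ℝ) : ℝ≥0∞ :=
  essSup (fun p : Euc n × Euc n => ENNReal.ofReal |u p.1 - u p.2|)
    ((volume.restrict s).prod (volume.restrict s))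

/-- The Riesz-type kernel `1 / (|x-y|ⁿ Ψ(1/|x-y|))`. -/
def rieszKernel {n : ℕ} (Ψ : ℝ → ℝ≥0∞) (x y : Euc n) : ℝ≥0∞ :=
  (ENNReal.ofReal (‖x - y‖ ^ n) * Ψ (1 / ‖x - y‖))⁻¹

/-- The Riesz-type potential `I_Ψ f`. -/
def rieszPot {n : ℕ} (Ψ : ℝ → ℝ≥0∞) (f : Euc n → ℝ≥0∞) (x : Euc n) : ℝ≥0∞ :=
  ∫⁻ y, f y * rieszKernel Ψ x y

/-- The capacity `C_{Ψ,1}`. -/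
def capPsi {n : ℕ} (Ψ : ℝ → ℝ≥0∞) (E : Set (Euc n)) : ℝ≥0∞ :=
  ⨅ (f : Euc n → ℝ≥0∞) (_ : Measurable f) (_ : ∀ x ∈ E, 1 ≤ rieszPot Ψ f x),
    ∫⁻ x, f x


lemma le_youngConj (A : ℝ → ℝ≥0∞) {s : ℝ} (hs : 0 ≤ s) (t : ℝ) :
    ENNReal.ofReal (s * t) - A s ≤ youngConj A t :=
  le_iSup_of_le (⟨s, hs⟩ : Ici (0:ℝ)) le_rfl

lemma ennreal_mul_sub_le (a b c : ℝ≥0∞) : a * b - a * c ≤ a * (b - c) := by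
  rw [tsub_le_iff_right, ← mul_add]
  exact mul_le_mul_right le_tsub_add _

lemma youngConj_mono (A : ℝ → ℝ≥0∞) : Monotone (youngConj A) := by
  intro t₁ t₂ h
  refine iSup_mono ?_
  rintro ⟨s, hs⟩
  exact tsub_le_tsub_right (ENNReal.ofReal_le_ofReal (mul_le_mul_of_nonneg_left h hs)) _

lemma youngConj_superlin (A : ℝ → ℝ≥0∞) (hAfin : ∀ t : ℝ, A t ≠ ∞) (M : ℝ) :
    ∃ r₀ : ℝ, 0 < r₀ ∧ ∀ u : ℝ, r₀ ≤ u → ENNReal.ofReal (M * u) ≤ youngConj A u := by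
  set s : ℝ := max M 0 + 1 with hsdef
  have hs0 : 0 ≤ s := by positivity
  set a : ℝ := (A s).toReal with hadef
  have ha0 : 0 ≤ a := ENNReal.toReal_nonneg
  refine ⟨max a 1, by positivity, fun u hu => ?_⟩
  have hu1 : 1 ≤ u := le_trans (le_max_right _ _) hu
  have hua : a ≤ u := le_trans (le_max_left _ _) hu
  have h1 : M * u ≤ s * u - a := by
    have h2 : M * u ≤ max M 0 * u := by
      exact mul_le_mul_of_nonneg_right (le_max_left M 0) (by linarith)
    have : s * u = max M 0 * u + u := by rw [hsdef]; ring
    linarith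
  calc ENNReal.ofReal (M * u) ≤ ENNReal.ofReal (s * u - a) := ENNReal.ofReal_le_ofReal h1
    _ = ENNReal.ofReal (s * u) - ENNReal.ofReal a := ENNReal.ofReal_sub _ ha0
    _ = ENNReal.ofReal (s * u) - A s := by rw [hadef, ENNReal.ofReal_toReal (hAfin s)]
    _ ≤ youngConj A u := le_youngConj A hs0 u

lemma youngConj_step (A : ℝ → ℝ≥0∞) (hAfin : ∀ t : ℝ, A t ≠ ∞)
    {C t₀ : ℝ} (hC : 2 < C) (ht₀ : 0 ≤ t₀)
    (h : ∀ t : ℝ, t₀ ≤ t → A (2 * t) ≤ ENNReal.ofReal C * A t)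
    {r : ℝ} (hr : 0 ≤ r) :
    youngConj A r ≤ ENNReal.ofReal (1 / C) * youngConj A ((C / 2) * r)
      + ENNReal.ofReal (t₀ * r) := by
  refine iSup_le ?_
  rintro ⟨s, hs⟩
  simp only
  rcases le_total s t₀ with hst | hst
  · calc ENNReal.ofReal (s * r) - A s ≤ ENNReal.ofReal (s * r) := tsub_le_self
      _ ≤ ENNReal.ofReal (t₀ * r) := ENNReal.ofReal_le_ofReal (mul_le_mul_of_nonneg_right hst hr)
      _ ≤ _ := le_add_self
  · have key : ENNReal.ofReal C * (ENNReal.ofReal (s * r) - A s) ≤ youngConj A ((C / 2) * r) := by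
      have h2s : ENNReal.ofReal ((2 * s) * ((C / 2) * r)) - A (2 * s) ≤ youngConj A ((C / 2) * r) :=
        le_youngConj A (by linarith) _
      have heq : (2 * s) * ((C / 2) * r) = C * (s * r) := by ring
      rw [heq, ENNReal.ofReal_mul (by linarith : (0:ℝ) ≤ C)] at h2s
      have hms : ENNReal.ofReal C * (ENNReal.ofReal (s * r) - A s)
          = ENNReal.ofReal C * ENNReal.ofReal (s * r) - ENNReal.ofReal C * A s :=
        ENNReal.mul_sub (fun _ _ => ENNReal.ofReal_ne_top)
      rw [hms]
      exact le_trans (tsub_le_tsub_left (h s hst) _) h2s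
    have hCC : ENNReal.ofReal (1 / C) * ENNReal.ofReal C = 1 := by
      rw [← ENNReal.ofReal_mul (by positivity)]
      rw [one_div, inv_mul_cancel₀ (by linarith : C ≠ 0), ENNReal.ofReal_one]
    calc ENNReal.ofReal (s * r) - A s
        = ENNReal.ofReal (1 / C) * (ENNReal.ofReal C * (ENNReal.ofReal (s * r) - A s)) := by
          rw [← mul_assoc, hCC, one_mul]
      _ ≤ ENNReal.ofReal (1 / C) * youngConj A ((C / 2) * r) := mul_le_mul_right key _
      _ ≤ _ := le_self_add

lemma youngConj_nabla2 (A : ℝ → ℝ≥0∞) (hAfin : ∀ t : ℝ, A t ≠ ∞) (hΔ : Delta2Infty A) :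
    ∃ l : ℝ, 1 < l ∧ ∃ r₀ : ℝ, 0 < r₀ ∧ ∀ r : ℝ, r₀ ≤ r →
      youngConj A r ≤ ENNReal.ofReal (1 / (2 * l)) * youngConj A (l * r) := by
  obtain ⟨C, hC, t₀, ht₀, h⟩ := hΔ
  have hC0 : (0:ℝ) < C := by linarith
  set l : ℝ := (C / 2) ^ 2 with hldef
  have hl1 : 1 < l := by rw [hldef]; nlinarith
  have hl0 : (0:ℝ) < l := by linarith
  obtain ⟨r₁, hr₁, hsup⟩ := youngConj_superlin A hAfin (2 * t₀ * C ^ 2 / l)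
  refine ⟨l, hl1, max (r₁ / l) 1, by positivity, fun r hr => ?_⟩
  have hr1 : 1 ≤ r := le_trans (le_max_right _ _) hr
  have hr0 : 0 ≤ r := by linarith
  have hlr : r₁ ≤ l * r := by
    have h1 : r₁ / l ≤ r := le_trans (le_max_left _ _) hr
    calc r₁ = l * (r₁ / l) := by field_simp
      _ ≤ l * r := by nlinarith
  have step1 := youngConj_step A hAfin hC ht₀ h hr0
  have step2 := youngConj_step A hAfin hC ht₀ h (r := (C / 2) * r) (by positivity)
  have harg : (C / 2) * ((C / 2) * r) = l * r := by rw [hldef]; ring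
  rw [harg] at step2
  set X := youngConj A (l * r) with hX
  have hXbig : ENNReal.ofReal (2 * t₀ * r) ≤ ENNReal.ofReal (1 / C ^ 2) * X := by
    have h1 := hsup (l * r) hlr
    have h2 : 2 * t₀ * C ^ 2 / l * (l * r) = 2 * t₀ * C ^ 2 * r := by field_simp
    rw [h2] at h1
    calc ENNReal.ofReal (2 * t₀ * r)
        = ENNReal.ofReal (1 / C ^ 2) * ENNReal.ofReal (2 * t₀ * C ^ 2 * r) := by
          rw [← ENNReal.ofReal_mul (by positivity)]; congr 1; field_simp
      _ ≤ ENNReal.ofReal (1 / C ^ 2) * X := mul_le_mul_right h1 _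
  calc youngConj A r
      ≤ ENNReal.ofReal (1 / C) * youngConj A ((C / 2) * r) + ENNReal.ofReal (t₀ * r) := step1
    _ ≤ ENNReal.ofReal (1 / C) * (ENNReal.ofReal (1 / C) * X + ENNReal.ofReal (t₀ * ((C / 2) * r)))
        + ENNReal.ofReal (t₀ * r) := add_le_add_left (mul_le_mul_right step2 _) _
    _ = ENNReal.ofReal (1 / C ^ 2) * X
        + (ENNReal.ofReal (1 / C * (t₀ * ((C / 2) * r))) + ENNReal.ofReal (t₀ * r)) := by
          rw [mul_add, ← mul_assoc, ← ENNReal.ofReal_mul (by positivity),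
            ← ENNReal.ofReal_mul (by positivity), add_assoc]
          congr 2
          field_simp
    _ ≤ ENNReal.ofReal (1 / C ^ 2) * X + ENNReal.ofReal (2 * t₀ * r) := by
          gcongr
          rw [← ENNReal.ofReal_add (by positivity) (by positivity)]
          apply ENNReal.ofReal_le_ofReal
          have : 1 / C * (t₀ * (C / 2 * r)) = t₀ * r / 2 := by field_simp
          rw [this]; nlinarith
    _ ≤ ENNReal.ofReal (1 / C ^ 2) * X + ENNReal.ofReal (1 / C ^ 2) * X := by gcongr
    _ = ENNReal.ofReal (1 / (2 * l)) * X := by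
          rw [← add_mul, ← ENNReal.ofReal_add (by positivity) (by positivity)]
          congr 2
          rw [hldef]; field_simp; ring

lemma F_scale (A : ℝ → ℝ≥0∞) (e : ℝ) {l r₀ : ℝ} (hl : 1 < l) (hr₀ : 0 < r₀)
    (hnab : ∀ r : ℝ, r₀ ≤ r → youngConj A r ≤ ENNReal.ofReal (1 / (2 * l)) * youngConj A (l * r))
    {s : ℝ} (hs : l * r₀ ≤ s) :
    ∫⁻ r in Ioi (s / l), youngConj A r / ENNReal.ofReal (r ^ (1 + e))
      ≤ ENNReal.ofReal (1 / (2 * l) * l ^ (1 + e) * l⁻¹) *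
        ∫⁻ r in Ioi s, youngConj A r / ENNReal.ofReal (r ^ (1 + e)) := by
  have hl0 : (0:ℝ) < l := by linarith
  have hs0 : (0:ℝ) < s := lt_of_lt_of_le (mul_pos hl0 hr₀) hs
  have hsl : r₀ ≤ s / l := (le_div_iff₀ hl0).2 (by nlinarith)
  set g : ℝ → ℝ≥0∞ := fun u => youngConj A u / ENNReal.ofReal (u ^ (1 + e)) with hgdef
  have hgm : Measurable g :=
    (youngConj_mono A).measurable.div
      (ENNReal.measurable_ofReal.comp (measurable_id.pow measurable_const))
  have hc0 : ENNReal.ofReal (l ^ (1 + e)) ≠ 0 :=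
    ne_of_gt (ENNReal.ofReal_pos.2 (Real.rpow_pos_of_pos hl0 _))
  have hpt : ∀ r ∈ Ioi (s / l),
      g r ≤ ENNReal.ofReal (1 / (2 * l)) * ENNReal.ofReal (l ^ (1 + e)) * g (l * r) := by
    intro r hr
    rw [mem_Ioi] at hr
    have hrr : r₀ ≤ r := le_trans hsl hr.le
    have hr0 : (0:ℝ) < r := lt_of_lt_of_le hr₀ hrr
    have key : ENNReal.ofReal (l ^ (1 + e)) * (youngConj A (l * r) / ENNReal.ofReal ((l * r) ^ (1 + e)))
        = youngConj A (l * r) / ENNReal.ofReal (r ^ (1 + e)) := by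
      rw [Real.mul_rpow hl0.le hr0.le, ENNReal.ofReal_mul (by positivity), ← mul_div_assoc]
      exact ENNReal.mul_div_mul_left _ _ hc0 ENNReal.ofReal_ne_top
    calc g r = youngConj A r / ENNReal.ofReal (r ^ (1 + e)) := rfl
      _ ≤ ENNReal.ofReal (1 / (2 * l)) * youngConj A (l * r) / ENNReal.ofReal (r ^ (1 + e)) :=
          ENNReal.div_le_div_right (hnab r hrr) _
      _ = ENNReal.ofReal (1 / (2 * l)) * (youngConj A (l * r) / ENNReal.ofReal (r ^ (1 + e))) :=
          mul_div_assoc _ _ _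
      _ = ENNReal.ofReal (1 / (2 * l)) * ENNReal.ofReal (l ^ (1 + e)) * g (l * r) := by
          rw [← key, mul_assoc]
  have hchg : ∫⁻ r in Ioi (s / l), g (l * r) = ENNReal.ofReal l⁻¹ * ∫⁻ u in Ioi s, g u := by
    rw [← lintegral_indicator measurableSet_Ioi, ← lintegral_indicator measurableSet_Ioi]
    have hfun : (Ioi (s / l)).indicator (fun r => g (l * r)) = fun r => (Ioi s).indicator g (l * r) := by
      funext r
      by_cases hmem : r ∈ Ioi (s / l)
      · rw [indicator_of_mem hmem]
        rw [indicator_of_mem (show l * r ∈ Ioi s from mem_Ioi.2 ((div_lt_iff₀' hl0).1 (mem_Ioi.1 hmem)))]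
      · rw [indicator_of_notMem hmem, indicator_of_notMem]
        intro hmem2
        exact hmem (mem_Ioi.2 ((div_lt_iff₀' hl0).2 (mem_Ioi.1 hmem2)))
    rw [hfun]
    have hmap := lintegral_map (μ := volume) (f := (Ioi s).indicator g)
      (g := fun x => l * x) (hgm.indicator measurableSet_Ioi) (measurable_const_mul l)
    rw [← hmap, Real.map_volume_mul_left (ne_of_gt hl0), lintegral_smul_measure]
    rw [abs_of_pos (inv_pos.2 hl0)]
    rfl
  calc ∫⁻ r in Ioi (s / l), g r
      ≤ ∫⁻ r in Ioi (s / l), ENNReal.ofReal (1 / (2 * l)) * ENNReal.ofReal (l ^ (1 + e)) * g (l * r) :=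
        setLIntegral_mono (((hgm.comp (measurable_const_mul l)).const_mul _)) hpt
    _ = ENNReal.ofReal (1 / (2 * l)) * ENNReal.ofReal (l ^ (1 + e)) *
        ∫⁻ r in Ioi (s / l), g (l * r) :=
        lintegral_const_mul' _ _ (ENNReal.mul_ne_top ENNReal.ofReal_ne_top ENNReal.ofReal_ne_top)
    _ = ENNReal.ofReal (1 / (2 * l) * l ^ (1 + e) * l⁻¹) * ∫⁻ u in Ioi s, g u := by
        rw [hchg, ← mul_assoc, ← ENNReal.ofReal_mul (by positivity),
          ← ENNReal.ofReal_mul (by positivity)]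

lemma delta2_youngConjB (A : ℝ → ℝ≥0∞) (hAfin : ∀ t : ℝ, A t ≠ ∞) (hΔ : Delta2Infty A)
    {e : ℝ} (he : 0 < e) :
    Delta2Infty (youngConj fun t =>
      ENNReal.ofReal (t ^ e) * ∫⁻ r in Ioi t, youngConj A r / ENNReal.ofReal (r ^ (1 + e))) := by
  set F : ℝ → ℝ≥0∞ := fun s => ∫⁻ r in Ioi s, youngConj A r / ENNReal.ofReal (r ^ (1 + e))
    with hFdef
  set B : ℝ → ℝ≥0∞ := fun t => ENNReal.ofReal (t ^ e) * F t with hBdef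
  show Delta2Infty (youngConj B)
  by_cases hFin : ∀ s : ℝ, 0 < s → F s = ∞
  · refine ⟨3, by norm_num, 0, le_rfl, fun t ht => ?_⟩
    have hzero : ∀ u : ℝ, youngConj B u = 0 := by
      intro u
      refine le_antisymm (iSup_le ?_) (by simp)
      rintro ⟨s, hs⟩
      simp only
      have hs' : (0:ℝ) ≤ s := hs
      rcases hs'.lt_or_eq with h0 | h0
      · have hBs : B s = ∞ := by
          show ENNReal.ofReal (s ^ e) * F s = ∞
          rw [hFin s h0, ENNReal.mul_top
            (ne_of_gt (ENNReal.ofReal_pos.2 (Real.rpow_pos_of_pos h0 e)))]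
        simp [hBs, ENNReal.sub_top]
      · have hBs : B s = 0 := by
          show ENNReal.ofReal (s ^ e) * F s = 0
          rw [← h0, Real.zero_rpow (ne_of_gt he)]
          simp
        rw [hBs, ← h0]
        simp
    rw [hzero, hzero]
    simp
  push_neg at hFin
  obtain ⟨σ, hσ0, hσfin⟩ := hFin
  obtain ⟨l, hl1, r₀, hr₀, hnab⟩ := youngConj_nabla2 A hAfin hΔ
  have hl0 : (0:ℝ) < l := by linarith
  have hBscale : ∀ s : ℝ, l * r₀ ≤ s → B (s / l) ≤ ENNReal.ofReal (1 / (2 * l)) * B s := by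
    intro s hsl
    have hs0 : (0:ℝ) < s := lt_of_lt_of_le (mul_pos hl0 hr₀) hsl
    have hF := F_scale A e hl1 hr₀ hnab hsl
    have hle : (0:ℝ) < l ^ e := Real.rpow_pos_of_pos hl0 e
    calc B (s / l) = ENNReal.ofReal ((s / l) ^ e) * F (s / l) := rfl
      _ ≤ ENNReal.ofReal ((s / l) ^ e) * (ENNReal.ofReal (1 / (2 * l) * l ^ (1 + e) * l⁻¹) * F s) :=
          mul_le_mul_right hF _
      _ = ENNReal.ofReal ((s / l) ^ e * (1 / (2 * l) * l ^ (1 + e) * l⁻¹)) * F s := by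
          rw [← mul_assoc, ← ENNReal.ofReal_mul (by positivity)]
      _ = ENNReal.ofReal (1 / (2 * l) * s ^ e) * F s := by
          congr 1
          rw [Real.div_rpow hs0.le hl0.le, Real.rpow_add hl0, Real.rpow_one]
          field_simp
      _ = ENNReal.ofReal (1 / (2 * l)) * B s := by
          rw [ENNReal.ofReal_mul (by positivity), mul_assoc]
  set s₁ : ℝ := l * r₀ with hs₁def
  have hs₁0 : 0 < s₁ := mul_pos hl0 hr₀
  have hBσ : B σ ≠ ∞ := by
    show ENNReal.ofReal (σ ^ e) * F σ ≠ ∞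
    exact ENNReal.mul_ne_top ENNReal.ofReal_ne_top hσfin
  set b : ℝ := (B σ).toReal with hbdef
  have hb0 : 0 ≤ b := ENNReal.toReal_nonneg
  refine ⟨max (2 * l) (4 * s₁ / σ) + 1, ?_, max (2 * b / σ) 0, le_max_right _ _, fun t ht => ?_⟩
  · have h1 : 2 * l ≤ max (2 * l) (4 * s₁ / σ) := le_max_left _ _
    linarith
  have ht0 : 0 ≤ t := le_trans (le_max_right _ _) ht
  have hstar : ENNReal.ofReal (σ * t / 2) ≤ youngConj B t := by
    have h1 : ENNReal.ofReal (σ * t) - B σ ≤ youngConj B t := le_youngConj B hσ0.le t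
    have h2 : ENNReal.ofReal (σ * t / 2) ≤ ENNReal.ofReal (σ * t) - B σ := by
      conv_rhs => rw [← ENNReal.ofReal_toReal hBσ]
      rw [← hbdef, ← ENNReal.ofReal_sub _ hb0]
      apply ENNReal.ofReal_le_ofReal
      have h3 : 2 * b / σ ≤ t := le_trans (le_max_left _ _) ht
      rw [div_le_iff₀ hσ0] at h3
      linarith
    exact h2.trans h1
  refine iSup_le ?_
  rintro ⟨s, hs⟩
  simp only
  have hs' : (0:ℝ) ≤ s := hs
  rcases le_total s s₁ with hss | hss
  · calc ENNReal.ofReal (s * (2 * t)) - B s ≤ ENNReal.ofReal (s * (2 * t)) := tsub_le_self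
      _ ≤ ENNReal.ofReal (4 * s₁ / σ * (σ * t / 2)) := by
          apply ENNReal.ofReal_le_ofReal
          have h4 : 4 * s₁ / σ * (σ * t / 2) = 2 * s₁ * t := by field_simp; ring
          rw [h4]
          nlinarith [mul_le_mul_of_nonneg_right hss ht0]
      _ = ENNReal.ofReal (4 * s₁ / σ) * ENNReal.ofReal (σ * t / 2) :=
          ENNReal.ofReal_mul (by positivity)
      _ ≤ ENNReal.ofReal (4 * s₁ / σ) * youngConj B t := mul_le_mul_right hstar _
      _ ≤ ENNReal.ofReal (max (2 * l) (4 * s₁ / σ) + 1) * youngConj B t := by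
          gcongr
          have h5 : 4 * s₁ / σ ≤ max (2 * l) (4 * s₁ / σ) := le_max_right _ _
          linarith
  · have hs0 : (0:ℝ) < s := lt_of_lt_of_le hs₁0 hss
    have hkey := hBscale s hss
    have hc : ENNReal.ofReal (2 * l) * ENNReal.ofReal (s / l * t) = ENNReal.ofReal (s * (2 * t)) := by
      rw [← ENNReal.ofReal_mul (by positivity)]
      congr 1
      field_simp
    have hce : ENNReal.ofReal (2 * l) * B (s / l) ≤ B s := by
      calc ENNReal.ofReal (2 * l) * B (s / l)
          ≤ ENNReal.ofReal (2 * l) * (ENNReal.ofReal (1 / (2 * l)) * B s) :=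
            mul_le_mul_right hkey _
        _ = B s := by
            rw [← mul_assoc, ← ENNReal.ofReal_mul (by positivity), mul_one_div,
              div_self (by positivity : (2 * l) ≠ 0), ENNReal.ofReal_one, one_mul]
    calc ENNReal.ofReal (s * (2 * t)) - B s
        ≤ ENNReal.ofReal (s * (2 * t)) - ENNReal.ofReal (2 * l) * B (s / l) :=
          tsub_le_tsub_left hce _
      _ = ENNReal.ofReal (2 * l) * ENNReal.ofReal (s / l * t)
          - ENNReal.ofReal (2 * l) * B (s / l) := by rw [hc]
      _ ≤ ENNReal.ofReal (2 * l) * (ENNReal.ofReal (s / l * t) - B (s / l)) :=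
          ennreal_mul_sub_le _ _ _
      _ ≤ ENNReal.ofReal (2 * l) * youngConj B t :=
          mul_le_mul_right (le_youngConj B (by positivity) t) _
      _ ≤ ENNReal.ofReal (max (2 * l) (4 * s₁ / σ) + 1) * youngConj B t := by
          gcongr
          have h5 : 2 * l ≤ max (2 * l) (4 * s₁ / σ) := le_max_left _ _
          linarith

theorem youngShifted_delta2 {n : ℕ} (hn : 2 ≤ n)
    (A : ℝ → ℝ≥0∞) (hA : IsYoung A) (hAfin : ∀ t : ℝ, A t ≠ ∞)
    (hT : 3 ≤ n → TailCondition n A) (hΔ : Delta2Infty A) :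
    Delta2Infty (youngShifted n A) := by
  by_cases h2 : n = 2
  · unfold youngShifted
    rw [if_pos h2]
    exact hΔ
  · unfold youngShifted
    rw [if_neg h2]
    have hn3 : 3 ≤ n := by omega
    have hnr : (3:ℝ) ≤ (n:ℝ) := by exact_mod_cast hn3
    have he : 0 < youngExp n := by
      rw [youngExp]
      apply div_pos <;> linarith
    exact delta2_youngConjB A hAfin hΔ he
end
end

section
/- Let n ≥ 3 and let A be a Young function with ∫^∞ (t/A(t))^{1/(n−2)} dt < ∞. Then ∫^∞ A_{n−1}(t)/t^{n+1} dt = ∞ if and only if ∫^∞ t^{(1−n)/(n−2)} ( ∫_t^∞ Ã(s) s^{−1−(n−1)/(n−2)} ds )^{1−n} dt = ∞. -/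
open MeasureTheory Metric Set Filter ENNReal
open scoped Topology NNReal

noncomputable section

namespace YSD

open MeasureTheory Set ENNReal

variable {n : ℕ}

/-- `F` function: `F t = t^e * G t`. -/
def Ffun (n : ℕ) (G : ℝ → ℝ≥0∞) (t : ℝ) : ℝ≥0∞ :=
  ENNReal.ofReal (t ^ youngExp n) * G t

def Bfun (n : ℕ) (G : ℝ → ℝ≥0∞) : ℝ → ℝ≥0∞ := youngConj (Ffun n G)

def sigma (n : ℕ) (G : ℝ → ℝ≥0∞) (t : ℝ) : ℝ≥0∞ :=
  ⨆ (s : ℝ) (_ : 0 < s ∧ Ffun n G s < ENNReal.ofReal (s * t)), ENNReal.ofReal s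

def lamf (n : ℕ) (G : ℝ → ℝ≥0∞) (t : ℝ) : ℝ≥0∞ :=
  volume {s : ℝ | 0 < s ∧ Ffun n G s < ENNReal.ofReal (s * t)}

def qfun (n : ℕ) (G : ℝ → ℝ≥0∞) (s : ℝ) : ℝ≥0∞ :=
  ENNReal.ofReal (s ^ (-youngExp n)) * G s ^ (1 - (n : ℝ))

section NumFacts
variable (hn : 3 ≤ n)
include hn

lemma hN3 : (3 : ℝ) ≤ (n : ℝ) := by exact_mod_cast hn

lemma hN2 : (1 : ℝ) ≤ (n : ℝ) - 2 := by have := hN3 hn; linarith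

lemma he1 : 1 < youngExp n := by
  have h2 := hN2 hn
  rw [youngExp, lt_div_iff₀ (by linarith)]
  linarith

lemma he2 : youngExp n ≤ 2 := by
  have h2 := hN2 hn
  rw [youngExp, div_le_iff₀ (by linarith)]
  linarith

lemma he_pos : 0 < youngExp n := lt_trans one_pos (he1 hn)

/-- `(e-1)*(1-N) = -e`, in the form needed. -/
lemma he_id1 : (youngExp n - 1) * (1 - (n : ℝ)) = -youngExp n := by
  have h2 := hN2 hn
  rw [youngExp]
  field_simp
  ring

lemma he_id2 : (1 - (n : ℝ)) / ((n : ℝ) - 2) = -youngExp n := by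
  have h2 := hN2 hn
  rw [youngExp]
  field_simp
  ring

end NumFacts

section Basic
variable {G : ℝ → ℝ≥0∞}

lemma Ffun_measurable (hG : Antitone G) : Measurable (Ffun n G) := by
  apply Measurable.mul
  · exact (measurable_id'.pow measurable_const).ennreal_ofReal
  · exact hG.measurable

lemma Bfun_mono : Monotone (Bfun n G) := by
  intro a b hab
  refine iSup_mono fun s => ?_
  refine tsub_le_tsub_right (ENNReal.ofReal_le_ofReal ?_) _
  exact mul_le_mul_of_nonneg_left hab s.2

lemma Bfun_measurable : Measurable (Bfun n G) := (Bfun_mono).measurable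

lemma lamf_mono : Monotone (lamf n G) := by
  intro a b hab
  apply measure_mono
  rintro s ⟨hs, hlt⟩
  refine ⟨hs, lt_of_lt_of_le hlt (ENNReal.ofReal_le_ofReal ?_)⟩
  exact mul_le_mul_of_nonneg_left hab hs.le

lemma lamf_measurable : Measurable (lamf n G) := (lamf_mono).measurable

/-- antitonicity of ENNReal rpow with non-positive exponent. -/
lemma ennrpow_anti {a b : ℝ≥0∞} {z : ℝ} (hz : 0 ≤ z) (h : a ≤ b) : b ^ (-z) ≤ a ^ (-z) := by
  rw [ENNReal.rpow_neg, ENNReal.rpow_neg]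
  exact ENNReal.inv_le_inv.2 (ENNReal.rpow_le_rpow h hz)

end Basic
section Pointwise
variable (hn : 3 ≤ n) {G : ℝ → ℝ≥0∞}

/-- L1a : `B t ≤ t * σ t`. -/
lemma Bfun_le (t : ℝ) : Bfun n G t ≤ ENNReal.ofReal t * sigma n G t := by
  refine iSup_le fun s => ?_
  obtain ⟨s, hs⟩ := s
  by_cases h : Ffun n G s < ENNReal.ofReal (s * t)
  · have hst : 0 < s * t := by
      by_contra hst
      rw [ENNReal.ofReal_eq_zero.2 (not_lt.1 hst)] at h
      exact (not_lt.2 (zero_le)) h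
    have hspos : 0 < s := by
      rcases lt_or_eq_of_le (mem_Ici.1 hs) with h' | h'
      · exact h'
      · exfalso; rw [← h', zero_mul] at hst; exact lt_irrefl _ hst
    have ht : 0 < t := by
      rcases mul_pos_iff.1 hst with ⟨h1, h2⟩ | ⟨h1, h2⟩
      · exact h2
      · linarith
    calc ENNReal.ofReal (s * t) - Ffun n G s ≤ ENNReal.ofReal (s * t) := tsub_le_self
      _ = ENNReal.ofReal t * ENNReal.ofReal s := by
          rw [mul_comm s t, ENNReal.ofReal_mul ht.le]
      _ ≤ ENNReal.ofReal t * sigma n G t := by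
          refine mul_le_mul_right ?_ _
          exact le_iSup_of_le s (le_iSup_of_le ⟨hspos, h⟩ le_rfl)
  · rw [tsub_eq_zero_of_le (not_lt.1 h)]
    exact zero_le
end Pointwise

section Pointwise2
variable {G : ℝ → ℝ≥0∞}

/-- L1b : `t * σ t ≤ B (2t)`. -/
lemma le_Bfun (t : ℝ) : ENNReal.ofReal t * sigma n G t ≤ Bfun n G (2 * t) := by
  rw [sigma, ENNReal.mul_iSup]
  refine iSup_le fun s => ?_
  rw [ENNReal.mul_iSup]
  refine iSup_le fun hs => ?_
  obtain ⟨hspos, hlt⟩ := hs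
  have hst : 0 < s * t := by
    by_contra hst
    rw [ENNReal.ofReal_eq_zero.2 (not_lt.1 hst)] at hlt
    exact (not_lt.2 (zero_le)) hlt
  calc ENNReal.ofReal t * ENNReal.ofReal s = ENNReal.ofReal (s * t) := by
        rw [mul_comm, ← ENNReal.ofReal_mul hspos.le]
    _ = ENNReal.ofReal (s * (2 * t)) - ENNReal.ofReal (s * t) := by
        rw [← ENNReal.ofReal_sub _ hst.le]
        ring_nf
    _ ≤ ENNReal.ofReal (s * (2 * t)) - Ffun n G s := tsub_le_tsub_left hlt.le _
    _ ≤ Bfun n G (2 * t) := le_iSup_of_le ⟨s, hspos.le⟩ le_rfl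

/-- L2a : `λ t ≤ σ t`. -/
lemma lamf_le_sigma (t : ℝ) : lamf n G t ≤ sigma n G t := by
  by_cases hfin : sigma n G t = ⊤
  · rw [hfin]; exact le_top
  have hsub : {s : ℝ | 0 < s ∧ Ffun n G s < ENNReal.ofReal (s * t)} ⊆
      Ioc 0 ((sigma n G t).toReal) := by
    rintro s ⟨hs, hlt⟩
    refine ⟨hs, ?_⟩
    have h1 : ENNReal.ofReal s ≤ sigma n G t := le_iSup_of_le s (le_iSup_of_le ⟨hs, hlt⟩ le_rfl)
    exact (ENNReal.ofReal_le_iff_le_toReal hfin).1 h1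
  calc lamf n G t ≤ volume (Ioc 0 ((sigma n G t).toReal)) := measure_mono hsub
    _ = ENNReal.ofReal ((sigma n G t).toReal - 0) := Real.volume_Ioc
    _ ≤ sigma n G t := by rw [sub_zero]; exact ENNReal.ofReal_toReal_le

/-- L2b : `σ t ≤ λ (2t)`, using antitonicity of `G`. -/
lemma sigma_le_lamf (hn : 3 ≤ n) (hG : Antitone G) (t : ℝ) :
    sigma n G t ≤ lamf n G (2 * t) := by
  refine iSup_le fun s₀ => iSup_le fun hs₀ => ?_
  obtain ⟨hs₀pos, hlt⟩ := hs₀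
  have hst : 0 < s₀ * t := by
    by_contra hst
    rw [ENNReal.ofReal_eq_zero.2 (not_lt.1 hst)] at hlt
    exact (not_lt.2 (zero_le)) hlt
  have ht : 0 < t := by
    rcases mul_pos_iff.1 hst with ⟨h1, h2⟩ | ⟨h1, h2⟩
    · exact h2
    · linarith
  have hsub : Ioc s₀ (2 * s₀) ⊆ {s : ℝ | 0 < s ∧ Ffun n G s < ENNReal.ofReal (s * (2 * t))} := by
    rintro s ⟨hs1, hs2⟩
    have hspos : 0 < s := lt_trans hs₀pos hs1
    refine ⟨hspos, ?_⟩
    set e := youngExp n with he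
    have hepos : 0 < e := he_pos hn
    have hs₀e : 0 < s₀ ^ e := Real.rpow_pos_of_pos hs₀pos e
    -- G s₀ < ofReal (s₀ * t / s₀ ^ e)
    have h1 : G s₀ < ENNReal.ofReal (s₀ * t / s₀ ^ e) := by
      rw [ENNReal.ofReal_div_of_pos hs₀e]
      rw [ENNReal.lt_div_iff_mul_lt (Or.inl ?_) (Or.inl ?_)]
      · rw [mul_comm]; exact hlt
      · simp [ENNReal.ofReal_eq_zero, not_le, hs₀e]
      · exact ENNReal.ofReal_ne_top
    have h2 : Ffun n G s ≤ ENNReal.ofReal (s ^ e) * G s₀ :=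
      mul_le_mul_right (hG hs1.le) _
    have h3 : ENNReal.ofReal (s ^ e) * G s₀ <
        ENNReal.ofReal (s ^ e) * ENNReal.ofReal (s₀ * t / s₀ ^ e) := by
      refine (ENNReal.mul_lt_mul_iff_right ?_ ENNReal.ofReal_ne_top).2 h1
      simp [ENNReal.ofReal_eq_zero, not_le, Real.rpow_pos_of_pos hspos e]
    have h4 : s ^ e * (s₀ * t / s₀ ^ e) ≤ s * (2 * t) := by
      have hratio : (s / s₀) ^ (e - 1) ≤ 2 := by
        have hb1 : (1 : ℝ) ≤ s / s₀ := (one_le_div hs₀pos).2 hs1.le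
        have hb2 : s / s₀ ≤ 2 := (div_le_iff₀ hs₀pos).2 (by linarith)
        calc (s / s₀) ^ (e - 1) ≤ (2 : ℝ) ^ (e - 1) :=
              Real.rpow_le_rpow (by linarith) hb2 (by have := he1 hn; linarith)
          _ ≤ (2 : ℝ) ^ (1 : ℝ) :=
              Real.rpow_le_rpow_of_exponent_le one_le_two (by have := he2 hn; linarith)
          _ = 2 := Real.rpow_one 2
      have hsplit : ∀ x : ℝ, 0 < x → x ^ e = x ^ (e - 1) * x := fun x hx => by
        rw [Real.rpow_sub hx, Real.rpow_one]
        field_simp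
      have key : s ^ e * (s₀ * t / s₀ ^ e) = s * t * (s / s₀) ^ (e - 1) := by
        rw [Real.div_rpow hspos.le hs₀pos.le, hsplit s hspos, hsplit s₀ hs₀pos]
        have h₁ : s₀ ^ (e - 1) ≠ 0 := ne_of_gt (Real.rpow_pos_of_pos hs₀pos _)
        field_simp
      rw [key]
      have hst' : 0 ≤ s * t := by positivity
      calc s * t * (s / s₀) ^ (e - 1) ≤ s * t * 2 := by
            exact mul_le_mul_of_nonneg_left hratio hst'
        _ = s * (2 * t) := by ring
    calc Ffun n G s ≤ ENNReal.ofReal (s ^ e) * G s₀ := h2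
      _ < ENNReal.ofReal (s ^ e) * ENNReal.ofReal (s₀ * t / s₀ ^ e) := h3
      _ = ENNReal.ofReal (s ^ e * (s₀ * t / s₀ ^ e)) := by
          rw [← ENNReal.ofReal_mul (Real.rpow_pos_of_pos hspos e).le]
      _ ≤ ENNReal.ofReal (s * (2 * t)) := ENNReal.ofReal_le_ofReal h4
  calc ENNReal.ofReal s₀ = volume (Ioc s₀ (2 * s₀)) := by
        rw [Real.volume_Ioc]; congr 1; ring
    _ ≤ lamf n G (2 * t) := measure_mono hsub

end Pointwise2

section QBasic
variable {G : ℝ → ℝ≥0∞}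

lemma qfun_measurable (hG : Antitone G) : Measurable (qfun n G) := by
  apply Measurable.mul
  · exact (measurable_id'.pow measurable_const).ennreal_ofReal
  · exact hG.measurable.pow measurable_const

/-- Persistence : `(s/u)^e * q s ≤ q u` for `0 < s ≤ u`. -/
lemma qfun_persist (hn : 3 ≤ n) (hG : Antitone G) {s u : ℝ} (hs : 0 < s) (hsu : s ≤ u) :
    ENNReal.ofReal ((s / u) ^ youngExp n) * qfun n G s ≤ qfun n G u := by
  set e := youngExp n with he
  have hu : 0 < u := lt_of_lt_of_le hs hsu
  have h1 : ENNReal.ofReal ((s / u) ^ e) * ENNReal.ofReal (s ^ (-e)) =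
      ENNReal.ofReal (u ^ (-e)) := by
    rw [← ENNReal.ofReal_mul (Real.rpow_nonneg (by positivity) e)]
    congr 1
    rw [Real.div_rpow hs.le hu.le, Real.rpow_neg hs.le, Real.rpow_neg hu.le]
    field_simp
  have h2 : G s ^ (1 - (n : ℝ)) ≤ G u ^ (1 - (n : ℝ)) := by
    rw [show (1 - (n : ℝ)) = -((n : ℝ) - 1) by ring]
    exact ennrpow_anti (by have := hN3 hn; linarith) (hG hsu)
  calc ENNReal.ofReal ((s / u) ^ e) * qfun n G s
      = ENNReal.ofReal (u ^ (-e)) * G s ^ (1 - (n : ℝ)) := by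
        rw [qfun, ← he, ← mul_assoc, h1]
    _ ≤ ENNReal.ofReal (u ^ (-e)) * G u ^ (1 - (n : ℝ)) := mul_le_mul_right h2 _
    _ = qfun n G u := rfl

/-- In the degenerate case `G s₀ = 0`, `B t = ⊤` for positive `t`. -/
lemma Bfun_eq_top (hn : 3 ≤ n) (hG : Antitone G) {s₀ t : ℝ} (hs₀ : 0 < s₀)
    (hG0 : G s₀ = 0) (ht : 0 < t) : Bfun n G t = ⊤ := by
  apply ENNReal.eq_top_of_forall_nnreal_le
  intro r
  set s : ℝ := max s₀ ((r : ℝ) / t) with hs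
  have hss₀ : s₀ ≤ s := le_max_left _ _
  have hF : Ffun n G s = 0 := by
    rw [Ffun]
    have : G s = 0 := le_antisymm (hG0 ▸ hG hss₀) (zero_le)
    rw [this, mul_zero]
  have h1 : (r : ℝ≥0∞) ≤ ENNReal.ofReal (s * t) := by
    rw [← ENNReal.ofReal_coe_nnreal]
    apply ENNReal.ofReal_le_ofReal
    calc (r : ℝ) = (r : ℝ) / t * t := by field_simp
      _ ≤ s * t := mul_le_mul_of_nonneg_right (le_max_right _ _) ht.le
  calc (r : ℝ≥0∞) ≤ ENNReal.ofReal (s * t) - Ffun n G s := by rw [hF, tsub_zero]; exact h1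
    _ ≤ Bfun n G t := le_iSup_of_le ⟨s, le_trans hs₀.le hss₀⟩ le_rfl

end QBasic

section IntegralTools

/-- Scaling: `∫_{Ioi c} f(2t) dt = (1/2) ∫_{Ioi 2c} f`. -/
lemma lint_scale (f : ℝ → ℝ≥0∞) (hf : Measurable f) (c : ℝ) :
    ∫⁻ t in Ioi c, f (2 * t) = ENNReal.ofReal (1 / 2) * ∫⁻ u in Ioi (2 * c), f u := by
  have hmap : Measure.map (fun x : ℝ => 2 * x) volume =
      ENNReal.ofReal |(2 : ℝ)⁻¹| • volume := Real.map_volume_mul_left (by norm_num)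
  have hpre : (fun x : ℝ => 2 * x) ⁻¹' Ioi (2 * c) = Ioi c := by
    ext x
    simp only [mem_preimage, mem_Ioi]
    constructor <;> intro h <;> linarith
  have h1 := setLIntegral_map (μ := volume) (measurableSet_Ioi (a := 2 * c)) hf
      (measurable_const_mul (2 : ℝ))
  rw [hmap] at h1
  rw [hpre] at h1
  rw [← h1]
  rw [Measure.restrict_smul, lintegral_smul_measure]
  norm_num [abs_of_pos]

/-- `∫_{Ioi m} t^(-N) dt = (1/(N-1)) * m^(1-N)` for `m > 0`. -/
lemma lint_rpow (hn : 3 ≤ n) {m : ℝ} (hm : 0 < m) :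
    ∫⁻ t in Ioi m, ENNReal.ofReal (t ^ (-(n : ℝ))) =
      ENNReal.ofReal (1 / ((n : ℝ) - 1)) * ENNReal.ofReal (m ^ (1 - (n : ℝ))) := by
  have hN := hN3 hn
  have hlt : (-(n : ℝ)) < -1 := by linarith
  have hint := integral_Ioi_rpow_of_lt hlt hm
  have hInt : IntegrableOn (fun t : ℝ => t ^ (-(n : ℝ))) (Ioi m) :=
    integrableOn_Ioi_rpow_of_lt hlt hm
  have h1 : ∫⁻ t in Ioi m, ENNReal.ofReal (t ^ (-(n : ℝ))) =
      ENNReal.ofReal (∫ t in Ioi m, t ^ (-(n : ℝ))) := by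
    rw [← ofReal_integral_eq_lintegral_ofReal hInt]
    filter_upwards [self_mem_ae_restrict (measurableSet_Ioi : MeasurableSet (Ioi m))]
      with t ht
    exact Real.rpow_nonneg (le_of_lt (lt_trans hm ht)) _
  rw [h1, hint]
  rw [← ENNReal.ofReal_mul (le_of_lt (by apply div_pos one_pos; linarith))]
  congr 1
  have h2 : -(n : ℝ) + 1 = 1 - (n : ℝ) := by ring
  rw [h2]
  have h3 : (1 : ℝ) - (n : ℝ) ≠ 0 := by linarith
  have h4 : (n : ℝ) - 1 ≠ 0 := by linarith
  field_simp
  ring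

/-- integral of a function bounded below by a positive constant on `Ioi m` is `⊤`. -/
lemma lint_const_top {f : ℝ → ℝ≥0∞} {m : ℝ} {ε : ℝ≥0∞} (hε : ε ≠ 0)
    (h : ∀ t ∈ Ioi m, ε ≤ f t) : ∫⁻ t in Ioi m, f t = ⊤ := by
  have h1 : ∫⁻ t in Ioi m, ε ≤ ∫⁻ t in Ioi m, f t := by
    apply lintegral_mono_ae
    rw [ae_restrict_iff' measurableSet_Ioi]
    exact ae_of_all _ h
  rw [setLIntegral_const, Real.volume_Ioi, ENNReal.mul_top hε] at h1
  exact top_le_iff.1 h1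

/-- conversion : `(ofReal (t ^ k))⁻¹ = ofReal (t ^ (-(k:ℝ)))` for `t > 0`. -/
lemma inv_npow_eq {t : ℝ} (ht : 0 < t) (k : ℕ) :
    (ENNReal.ofReal (t ^ k))⁻¹ = ENNReal.ofReal (t ^ (-(k : ℝ))) := by
  rw [← Real.rpow_natCast t k, ← ENNReal.ofReal_inv_of_pos (Real.rpow_pos_of_pos ht _),
    ← Real.rpow_neg ht.le]

end IntegralTools

section RpowHelpers

lemma rpow_merge {t : ℝ} (ht : 0 < t) (a b : ℝ) :
    ENNReal.ofReal (t ^ a) * ENNReal.ofReal (t ^ b) = ENNReal.ofReal (t ^ (a + b)) := by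
  rw [← ENNReal.ofReal_mul (Real.rpow_nonneg ht.le a), ← Real.rpow_add ht]

lemma scale_rpow {t : ℝ} (ht : 0 < t) (a : ℝ) :
    ENNReal.ofReal (t ^ a) = ENNReal.ofReal ((2 : ℝ) ^ (-a)) * ENNReal.ofReal ((2 * t) ^ a) := by
  rw [← ENNReal.ofReal_mul (Real.rpow_nonneg (by norm_num) (-a))]
  congr 1
  rw [Real.mul_rpow (by norm_num) ht.le, ← mul_assoc, ← Real.rpow_add (by norm_num), neg_add_cancel,
    Real.rpow_zero, one_mul]

lemma ofReal_rpow_ne_top {t a : ℝ} : ENNReal.ofReal (t ^ a) ≠ ⊤ := ENNReal.ofReal_ne_top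

lemma ofReal_rpow_pos {t : ℝ} (ht : 0 < t) (a : ℝ) : ENNReal.ofReal (t ^ a) ≠ 0 := by
  simp [ENNReal.ofReal_eq_zero, not_le, Real.rpow_pos_of_pos ht a]

end RpowHelpers

section E12
variable (hn : 3 ≤ n) {G : ℝ → ℝ≥0∞}
include hn

/-- E1. -/
lemma E1 :
    (∀ c : ℝ, 0 < c → ∫⁻ t in Ioi c, Bfun n G t / ENNReal.ofReal (t ^ (n + 1)) = ⊤) ↔
      (∀ c : ℝ, 0 < c → ∫⁻ t in Ioi c, sigma n G t * ENNReal.ofReal (t ^ (-(n : ℝ))) = ⊤) := by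
  have hexp : ((n + 1 : ℕ) : ℝ) = (n : ℝ) + 1 := by push_cast; ring
  have hcongr : ∀ c : ℝ, 0 < c →
      ∫⁻ t in Ioi c, Bfun n G t / ENNReal.ofReal (t ^ (n + 1)) =
        ∫⁻ t in Ioi c, Bfun n G t * ENNReal.ofReal (t ^ (-((n : ℝ) + 1))) := by
    intro c hc
    apply setLIntegral_congr_fun measurableSet_Ioi
    intro t ht
    have htpos : 0 < t := lt_trans hc ht
    beta_reduce
    rw [div_eq_mul_inv, inv_npow_eq htpos (n + 1), hexp]
  constructor
  · intro H c hc
    have h1 := H c hc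
    rw [hcongr c hc] at h1
    rw [← top_le_iff, ← h1]
    apply lintegral_mono_ae
    rw [ae_restrict_iff' measurableSet_Ioi]
    apply ae_of_all
    intro t ht
    have htpos : 0 < t := lt_trans hc ht
    calc Bfun n G t * ENNReal.ofReal (t ^ (-((n : ℝ) + 1)))
        ≤ ENNReal.ofReal t * sigma n G t * ENNReal.ofReal (t ^ (-((n : ℝ) + 1))) :=
          mul_le_mul_left (Bfun_le t) _
      _ = sigma n G t * (ENNReal.ofReal (t ^ (1 : ℝ)) * ENNReal.ofReal (t ^ (-((n : ℝ) + 1)))) := by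
          rw [Real.rpow_one]; ring
      _ = sigma n G t * ENNReal.ofReal (t ^ (-(n : ℝ))) := by
          rw [rpow_merge htpos]; norm_num
  · intro H c hc
    have hc2 : 0 < c / 2 := half_pos hc
    have h1 := H (c / 2) hc2
    set f : ℝ → ℝ≥0∞ := fun u => Bfun n G u * ENNReal.ofReal (u ^ (-((n : ℝ) + 1))) with hf
    have hfm : Measurable f :=
      Bfun_measurable.mul (measurable_id'.pow measurable_const).ennreal_ofReal
    have hbound : ∀ t ∈ Ioi (c / 2),
        sigma n G t * ENNReal.ofReal (t ^ (-(n : ℝ))) ≤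
          ENNReal.ofReal ((2 : ℝ) ^ ((n : ℝ) + 1)) * f (2 * t) := by
      intro t ht
      have htpos : 0 < t := lt_trans hc2 ht
      calc sigma n G t * ENNReal.ofReal (t ^ (-(n : ℝ)))
          = (ENNReal.ofReal t * sigma n G t) * ENNReal.ofReal (t ^ (-((n : ℝ) + 1))) := by
            have hm : ENNReal.ofReal (t ^ (-(n : ℝ))) =
                ENNReal.ofReal t * ENNReal.ofReal (t ^ (-((n : ℝ) + 1))) := by
              rw [show ENNReal.ofReal t = ENNReal.ofReal (t ^ (1 : ℝ)) by rw [Real.rpow_one],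
                rpow_merge htpos]
              norm_num
            rw [hm]
            ring
        _ ≤ Bfun n G (2 * t) * ENNReal.ofReal (t ^ (-((n : ℝ) + 1))) :=
            mul_le_mul_left (le_Bfun t) _
        _ = ENNReal.ofReal ((2 : ℝ) ^ ((n : ℝ) + 1)) * f (2 * t) := by
            rw [scale_rpow htpos (-((n : ℝ) + 1)), neg_neg, hf]
            ring
    have h2 : (⊤ : ℝ≥0∞) ≤ ENNReal.ofReal ((2 : ℝ) ^ ((n : ℝ) + 1)) *
        ∫⁻ t in Ioi (c / 2), f (2 * t) := by
      rw [← lintegral_const_mul' _ _ ENNReal.ofReal_ne_top, ← h1]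
      apply lintegral_mono_ae
      rw [ae_restrict_iff' measurableSet_Ioi]
      exact ae_of_all _ hbound
    rw [lint_scale f hfm, show 2 * (c / 2) = c by ring] at h2
    have h3 : ∫⁻ u in Ioi c, f u = ⊤ := by
      by_contra h
      exact (ENNReal.mul_ne_top (ENNReal.mul_ne_top ENNReal.ofReal_ne_top ENNReal.ofReal_ne_top)
        h) (top_le_iff.1 (by rwa [← mul_assoc] at h2))
    rw [hcongr c hc]
    exact h3

/-- E2. -/
lemma E2 (hG : Antitone G) :
    (∀ c : ℝ, 0 < c → ∫⁻ t in Ioi c, sigma n G t * ENNReal.ofReal (t ^ (-(n : ℝ))) = ⊤) ↔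
      (∀ c : ℝ, 0 < c → ∫⁻ t in Ioi c, lamf n G t * ENNReal.ofReal (t ^ (-(n : ℝ))) = ⊤) := by
  constructor
  · intro H c hc
    have hc2 : 0 < c / 2 := half_pos hc
    have h1 := H (c / 2) hc2
    set g : ℝ → ℝ≥0∞ := fun u => lamf n G u * ENNReal.ofReal (u ^ (-(n : ℝ))) with hg
    have hgm : Measurable g :=
      lamf_measurable.mul (measurable_id'.pow measurable_const).ennreal_ofReal
    have hbound : ∀ t ∈ Ioi (c / 2),
        sigma n G t * ENNReal.ofReal (t ^ (-(n : ℝ))) ≤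
          ENNReal.ofReal ((2 : ℝ) ^ (n : ℝ)) * g (2 * t) := by
      intro t ht
      have htpos : 0 < t := lt_trans hc2 ht
      calc sigma n G t * ENNReal.ofReal (t ^ (-(n : ℝ)))
          ≤ lamf n G (2 * t) * ENNReal.ofReal (t ^ (-(n : ℝ))) :=
            mul_le_mul_left (sigma_le_lamf hn hG t) _
        _ = ENNReal.ofReal ((2 : ℝ) ^ (n : ℝ)) * g (2 * t) := by
            rw [scale_rpow htpos (-(n : ℝ)), neg_neg, hg]
            ring
    have h2 : (⊤ : ℝ≥0∞) ≤ ENNReal.ofReal ((2 : ℝ) ^ (n : ℝ)) *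
        ∫⁻ t in Ioi (c / 2), g (2 * t) := by
      rw [← lintegral_const_mul' _ _ ENNReal.ofReal_ne_top, ← h1]
      apply lintegral_mono_ae
      rw [ae_restrict_iff' measurableSet_Ioi]
      exact ae_of_all _ hbound
    rw [lint_scale g hgm, show 2 * (c / 2) = c by ring] at h2
    by_contra h
    exact (ENNReal.mul_ne_top (ENNReal.mul_ne_top ENNReal.ofReal_ne_top ENNReal.ofReal_ne_top)
      h) (top_le_iff.1 (by rwa [← mul_assoc] at h2))
  · intro H c hc
    rw [← top_le_iff, ← H c hc]
    apply lintegral_mono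
    intro t
    exact mul_le_mul_left (lamf_le_sigma t) _

end E12

section Fubini
variable {G : ℝ → ℝ≥0∞}

lemma maxrpow {c ρ z : ℝ} (hc : 0 < c) (hρ : 0 < ρ) (hz : z ≤ 0) :
    ENNReal.ofReal (max c ρ ^ z) =
      min (ENNReal.ofReal (c ^ z)) (ENNReal.ofReal (ρ ^ z)) := by
  have hmono : Monotone ENNReal.ofReal := fun a b => ENNReal.ofReal_le_ofReal
  rw [← hmono.map_min]
  congr 1
  rcases le_total c ρ with h | h
  · rw [max_eq_right h, min_eq_right (Real.rpow_le_rpow_of_nonpos hc h hz)]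
  · rw [max_eq_left h, min_eq_left (Real.rpow_le_rpow_of_nonpos hρ h hz)]

/-- The key Fubini identity in the non-degenerate case. -/
lemma lam_fubini (hn : 3 ≤ n) (hG : Antitone G) (hND : ∀ s : ℝ, 0 < s → G s ≠ 0)
    {c : ℝ} (hc : 0 < c) :
    ∫⁻ t in Ioi c, lamf n G t * ENNReal.ofReal (t ^ (-(n : ℝ))) =
      ENNReal.ofReal (1 / ((n : ℝ) - 1)) *
        ∫⁻ s in Ioi 0, min (ENNReal.ofReal (c ^ (1 - (n : ℝ)))) (qfun n G s) := by
  have hN := hN3 hn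
  set w : ℝ → ℝ≥0∞ := fun t => ENNReal.ofReal (t ^ (-(n : ℝ))) with hw
  set k : ℝ≥0∞ := ENNReal.ofReal (c ^ (1 - (n : ℝ))) with hk
  set κ : ℝ≥0∞ := ENNReal.ofReal (1 / ((n : ℝ) - 1)) with hκ
  -- sublevel sets
  set S : ℝ → Set ℝ := fun t => {s : ℝ | 0 < s ∧ Ffun n G s < ENNReal.ofReal (s * t)} with hS
  have hSm : ∀ t : ℝ, MeasurableSet (S t) := by
    intro t
    have h1 : MeasurableSet {s : ℝ | Ffun n G s < ENNReal.ofReal (s * t)} :=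
      measurableSet_lt (Ffun_measurable hG) ((measurable_id'.mul_const t).ennreal_ofReal)
    exact (measurableSet_Ioi (a := (0:ℝ))).inter h1
  -- step A : rewrite the integrand as an inner integral
  have stepA : ∀ t : ℝ, lamf n G t * w t =
      ∫⁻ s, (S t).indicator (fun _ => w t) s := by
    intro t
    rw [lintegral_indicator (hSm t), setLIntegral_const, mul_comm]
    rfl
  -- step B : swap
  have hswap : ∫⁻ t in Ioi c, ∫⁻ s, (S t).indicator (fun _ => w t) s =
      ∫⁻ s, ∫⁻ t in Ioi c, (S t).indicator (fun _ => w t) s := by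
    apply lintegral_lintegral_swap
    have hD : MeasurableSet {p : ℝ × ℝ | 0 < p.2 ∧ Ffun n G p.2 < ENNReal.ofReal (p.2 * p.1)} := by
      have h1 : MeasurableSet {p : ℝ × ℝ | Ffun n G p.2 < ENNReal.ofReal (p.2 * p.1)} :=
        measurableSet_lt ((Ffun_measurable hG).comp measurable_snd)
          ((measurable_snd.mul measurable_fst).ennreal_ofReal)
      exact (measurable_snd measurableSet_Ioi).inter h1
    have huncurry : Function.uncurry (fun t s => (S t).indicator (fun _ => w t) s) =
        Set.indicator {p : ℝ × ℝ | 0 < p.2 ∧ Ffun n G p.2 < ENNReal.ofReal (p.2 * p.1)}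
          (fun p => w p.1) := by
      funext p
      rcases p with ⟨t, s⟩
      simp only [Function.uncurry_apply_pair, Set.indicator_apply, hS, mem_setOf_eq, mem_Ioi]
    rw [huncurry]
    exact (Measurable.indicator ((measurable_id'.pow measurable_const).ennreal_ofReal.comp
      measurable_fst) hD).aemeasurable
  -- step C : compute the inner integral
  have stepC : ∀ s : ℝ, (∫⁻ t in Ioi c, (S t).indicator (fun _ => w t) s) =
      (Ioi (0 : ℝ)).indicator (fun s => κ * min k (qfun n G s)) s := by
    intro s
    by_cases hs : 0 < s
    · rw [Set.indicator_of_mem (by exact hs : s ∈ Ioi (0:ℝ))]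
      have hT : ∀ t : ℝ, (S t).indicator (fun _ => w t) s =
          ({t : ℝ | Ffun n G s < ENNReal.ofReal (s * t)}).indicator w t := by
        intro t
        simp only [Set.indicator_apply, hS, mem_setOf_eq, mem_Ioi, hs, true_and]
      simp_rw [hT]
      have hTm : MeasurableSet {t : ℝ | Ffun n G s < ENNReal.ofReal (s * t)} :=
        measurableSet_lt measurable_const ((measurable_const_mul s).ennreal_ofReal)
      rw [lintegral_indicator hTm, Measure.restrict_restrict hTm]
      by_cases hFs : Ffun n G s = ⊤
      · have hempty : {t : ℝ | Ffun n G s < ENNReal.ofReal (s * t)} ∩ Ioi c = ∅ := by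
          apply eq_empty_of_forall_notMem
          intro t ht
          obtain ⟨h1, _⟩ := ht
          simp only [mem_setOf_eq, hFs] at h1
          exact not_top_lt h1
        rw [hempty]
        have hGtop : G s = ⊤ := by
          rcases ENNReal.mul_eq_top.1 hFs with ⟨_, h⟩ | ⟨h, _⟩
          · exact h
          · exact absurd h ENNReal.ofReal_ne_top
        have hq0 : qfun n G s = 0 := by
          rw [qfun, hGtop, ENNReal.top_rpow_of_neg (by linarith), mul_zero]
        rw [hq0, min_eq_right (zero_le), mul_zero]
        simp
      · -- finite case
        have hse : (0:ℝ) < s ^ youngExp n := Real.rpow_pos_of_pos hs _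
        have hGfin : G s ≠ ⊤ := by
          intro hGt
          rw [Ffun, hGt, ENNReal.mul_top (by simp [ENNReal.ofReal_eq_zero, not_le, hse])] at hFs
          exact hFs rfl
        have hg : 0 < (G s).toReal := ENNReal.toReal_pos (hND s hs) hGfin
        set g : ℝ := (G s).toReal with hgdef
        have hGs : G s = ENNReal.ofReal g := (ENNReal.ofReal_toReal hGfin).symm
        have hFval : Ffun n G s = ENNReal.ofReal (s ^ youngExp n * g) := by
          rw [Ffun, hGs, ← ENNReal.ofReal_mul hse.le]
        set ρ : ℝ := s ^ (youngExp n - 1) * g with hρdef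
        have hρ : 0 < ρ := mul_pos (Real.rpow_pos_of_pos hs _) hg
        have hsplit : s ^ youngExp n = s ^ (youngExp n - 1) * s := by
          rw [Real.rpow_sub hs, Real.rpow_one]
          field_simp
        have hset : {t : ℝ | Ffun n G s < ENNReal.ofReal (s * t)} ∩ Ioi c = Ioi (max c ρ) := by
          ext t
          simp only [mem_inter_iff, mem_setOf_eq, mem_Ioi, hFval]
          constructor
          · rintro ⟨h1, h2⟩
            rw [ENNReal.ofReal_lt_ofReal_iff'] at h1
            obtain ⟨h1, _⟩ := h1
            rw [max_lt_iff]
            refine ⟨h2, ?_⟩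
            rw [hsplit] at h1
            rw [hρdef]
            nlinarith [Real.rpow_pos_of_pos hs (youngExp n - 1)]
          · intro h
            rw [max_lt_iff] at h
            obtain ⟨h2, h1⟩ := h
            refine ⟨?_, h2⟩
            have hpow := Real.rpow_pos_of_pos hs (youngExp n - 1)
            rw [hρdef] at h1
            rw [ENNReal.ofReal_lt_ofReal_iff (by nlinarith)]
            rw [hsplit]
            nlinarith
        rw [hset, lint_rpow hn (lt_max_of_lt_left hc)]
        congr 1
        have hq : qfun n G s = ENNReal.ofReal (ρ ^ (1 - (n : ℝ))) := by
          rw [qfun, hGs, ENNReal.ofReal_rpow_of_pos hg,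
            ← ENNReal.ofReal_mul (Real.rpow_nonneg hs.le _)]
          congr 1
          rw [hρdef, Real.mul_rpow (Real.rpow_pos_of_pos hs _).le hg.le,
            ← Real.rpow_mul hs.le, he_id1 hn]
        rw [hq, maxrpow hc hρ (by linarith)]
    · rw [Set.indicator_of_notMem (by simpa using hs)]
      have hz : ∀ t : ℝ, (S t).indicator (fun _ => w t) s = 0 := by
        intro t
        apply Set.indicator_of_notMem
        intro hmem
        exact hs hmem.1
      simp_rw [hz]
      simp
  -- assemble
  calc ∫⁻ t in Ioi c, lamf n G t * w t
      = ∫⁻ t in Ioi c, ∫⁻ s, (S t).indicator (fun _ => w t) s := by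
        apply setLIntegral_congr_fun measurableSet_Ioi
        exact fun t _ => stepA t
    _ = ∫⁻ s, ∫⁻ t in Ioi c, (S t).indicator (fun _ => w t) s := hswap
    _ = ∫⁻ s, (Ioi (0 : ℝ)).indicator (fun s => κ * min k (qfun n G s)) s := by
        apply lintegral_congr
        exact stepC
    _ = ∫⁻ s in Ioi 0, κ * min k (qfun n G s) := lintegral_indicator measurableSet_Ioi _
    _ = κ * ∫⁻ s in Ioi 0, min k (qfun n G s) := lintegral_const_mul' _ _ ENNReal.ofReal_ne_top

end Fubini

section E3
variable {G : ℝ → ℝ≥0∞}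

/-- E3a : the truncated integral diverges for all `c` iff the tail integrals of `q` diverge. -/
lemma E3 (hn : 3 ≤ n) (hG : Antitone G) :
    (∀ c : ℝ, 0 < c →
        ∫⁻ s in Ioi 0, min (ENNReal.ofReal (c ^ (1 - (n : ℝ)))) (qfun n G s) = ⊤) ↔
      (∀ c : ℝ, 0 < c → ∫⁻ s in Ioi c, qfun n G s = ⊤) := by
  have hN := hN3 hn
  constructor
  · intro H c hc
    set k : ℝ≥0∞ := ENNReal.ofReal (c ^ (1 - (n : ℝ))) with hk
    have hsplit : ∫⁻ s in Ioi 0, min k (qfun n G s) =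
        (∫⁻ s in Ioc 0 c, min k (qfun n G s)) + ∫⁻ s in Ioi c, min k (qfun n G s) := by
      rw [← lintegral_union measurableSet_Ioi (Ioc_disjoint_Ioi le_rfl),
        Ioc_union_Ioi_eq_Ioi hc.le]
    have hfin : (∫⁻ s in Ioc 0 c, min k (qfun n G s)) ≠ ⊤ := by
      have h1 : (∫⁻ s in Ioc 0 c, min k (qfun n G s)) ≤ k * ENNReal.ofReal c := by
        calc (∫⁻ s in Ioc 0 c, min k (qfun n G s)) ≤ ∫⁻ _ in Ioc 0 c, k :=
              lintegral_mono fun s => min_le_left _ _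
          _ = k * volume (Ioc (0:ℝ) c) := setLIntegral_const _ _
          _ = k * ENNReal.ofReal c := by rw [Real.volume_Ioc, sub_zero]
      exact ne_top_of_le_ne_top (ENNReal.mul_ne_top ENNReal.ofReal_ne_top
        ENNReal.ofReal_ne_top) h1
    have htail : ∫⁻ s in Ioi c, min k (qfun n G s) = ⊤ := by
      by_contra h
      have := H c hc
      rw [hsplit] at this
      exact (ENNReal.add_ne_top.2 ⟨hfin, h⟩) this
    rw [← top_le_iff, ← htail]
    exact lintegral_mono fun s => min_le_right _ _
  · intro H c hc
    set e := youngExp n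
    have hepos : 0 < e := he_pos hn
    set k : ℝ≥0∞ := ENNReal.ofReal (c ^ (1 - (n : ℝ))) with hk
    have hk0 : k ≠ 0 := ofReal_rpow_pos hc _
    set εε : ℝ≥0∞ := ENNReal.ofReal ((1 / 2 : ℝ) ^ e) with hεε
    have hεε0 : εε ≠ 0 := ofReal_rpow_pos (by norm_num) _
    have hεεT : εε ≠ ⊤ := ENNReal.ofReal_ne_top
    have hεεone : εε * ENNReal.ofReal ((2 : ℝ) ^ e) = 1 := by
      rw [hεε, ← ENNReal.ofReal_mul (Real.rpow_nonneg (by norm_num) _),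
        ← Real.mul_rpow (by norm_num) (by norm_num)]
      norm_num
    set V : Set ℝ := {s : ℝ | 1 < s ∧ k < qfun n G s} with hV
    have hVm : MeasurableSet V := by
      have h1 : MeasurableSet {s : ℝ | k < qfun n G s} :=
        measurableSet_lt measurable_const (qfun_measurable hG)
      exact (measurableSet_Ioi (a := (1:ℝ))).inter h1
    by_cases hVvol : volume V = ⊤
    · have hVsub : V ⊆ Ioi (0 : ℝ) := fun s hs => lt_trans one_pos hs.1
      have h1 : ∫⁻ s in V, k ∂volume ≤ ∫⁻ s in V, min k (qfun n G s) := by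
        apply lintegral_mono_ae
        rw [ae_restrict_iff' hVm]
        exact ae_of_all _ fun s hs => le_min le_rfl hs.2.le
      rw [setLIntegral_const, hVvol, ENNReal.mul_top hk0] at h1
      rw [← top_le_iff]
      calc (⊤ : ℝ≥0∞) ≤ ∫⁻ s in V, min k (qfun n G s) := h1
        _ ≤ ∫⁻ s in Ioi 0, min k (qfun n G s) := lintegral_mono_set hVsub
    · -- the tail bound
      set S : ℝ := max 1 (volume V).toReal with hSdef
      have hS0 : 0 < S := lt_of_lt_of_le one_pos (le_max_left _ _)
      have hbound : ∀ s : ℝ, S < s → qfun n G s ≤ ENNReal.ofReal ((2 : ℝ) ^ e) * k := by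
        intro s₀ hs₀
        by_contra hq
        rw [not_le] at hq
        have hs₀1 : 1 < s₀ := lt_of_le_of_lt (le_max_left _ _) hs₀
        have hs₀pos : 0 < s₀ := lt_trans one_pos hs₀1
        have hsub : Ioc s₀ (2 * s₀) ⊆ V := by
          rintro u ⟨hu1, hu2⟩
          have hupos : 0 < u := lt_trans hs₀pos hu1
          refine ⟨lt_trans hs₀1 hu1, ?_⟩
          have hhalf : (1 / 2 : ℝ) ≤ s₀ / u := by
            rw [le_div_iff₀ hupos]
            linarith
          have h2 : εε ≤ ENNReal.ofReal ((s₀ / u) ^ e) :=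
            ENNReal.ofReal_le_ofReal
              (Real.rpow_le_rpow (by norm_num) hhalf hepos.le)
          calc k = εε * (ENNReal.ofReal ((2 : ℝ) ^ e) * k) := by
                rw [← mul_assoc, hεεone, one_mul]
            _ < εε * qfun n G s₀ := (ENNReal.mul_lt_mul_iff_right hεε0 hεεT).2 hq
            _ ≤ ENNReal.ofReal ((s₀ / u) ^ e) * qfun n G s₀ := mul_le_mul_left h2 _
            _ ≤ qfun n G u := qfun_persist hn hG hs₀pos hu1.le
        have hcontra : volume V < volume V := by
          calc volume V = ENNReal.ofReal ((volume V).toReal) :=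
                (ENNReal.ofReal_toReal hVvol).symm
            _ < ENNReal.ofReal s₀ := by
                rw [ENNReal.ofReal_lt_ofReal_iff hs₀pos]
                exact lt_of_le_of_lt (le_max_right 1 _) hs₀
            _ = volume (Ioc s₀ (2 * s₀)) := by rw [Real.volume_Ioc]; congr 1; ring
            _ ≤ volume V := measure_mono hsub
        exact lt_irrefl _ hcontra
      have hmin : ∀ s : ℝ, S < s → εε * qfun n G s ≤ min k (qfun n G s) := by
        intro s hs
        rcases le_or_gt (qfun n G s) k with h | h
        · rw [min_eq_right h]
          calc εε * qfun n G s ≤ 1 * qfun n G s := by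
                apply mul_le_mul_left
                rw [hεε, ← ENNReal.ofReal_one]
                apply ENNReal.ofReal_le_ofReal
                apply Real.rpow_le_one (by norm_num) (by norm_num) hepos.le
            _ = qfun n G s := one_mul _
        · rw [min_eq_left h.le]
          calc εε * qfun n G s ≤ εε * (ENNReal.ofReal ((2 : ℝ) ^ e) * k) :=
                mul_le_mul_right (hbound s hs) _
            _ = k := by rw [← mul_assoc, hεεone, one_mul]
      have htop : (⊤ : ℝ≥0∞) ≤ ∫⁻ s in Ioi S, min k (qfun n G s) := by
        have h1 : ∫⁻ s in Ioi S, εε * qfun n G s ≤ ∫⁻ s in Ioi S, min k (qfun n G s) := by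
          apply lintegral_mono_ae
          rw [ae_restrict_iff' measurableSet_Ioi]
          exact ae_of_all _ fun s hs => hmin s hs
        rw [lintegral_const_mul' _ _ hεεT, H S hS0, ENNReal.mul_top hεε0] at h1
        exact h1
      rw [← top_le_iff]
      calc (⊤ : ℝ≥0∞) ≤ ∫⁻ s in Ioi S, min k (qfun n G s) := htop
        _ ≤ ∫⁻ s in Ioi 0, min k (qfun n G s) := lintegral_mono_set (Ioi_subset_Ioi hS0.le)

end E3

section Main
variable {G : ℝ → ℝ≥0∞}

/-- Full equivalence, for an arbitrary antitone `G`. -/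
lemma main_iff (hn : 3 ≤ n) (hG : Antitone G) :
    (∀ c : ℝ, 0 < c → ∫⁻ t in Ioi c, Bfun n G t / ENNReal.ofReal (t ^ (n + 1)) = ⊤) ↔
      (∀ c : ℝ, 0 < c → ∫⁻ t in Ioi c, qfun n G t = ⊤) := by
  have hN := hN3 hn
  by_cases hdeg : ∃ s₀ : ℝ, 0 < s₀ ∧ G s₀ = 0
  · obtain ⟨s₀, hs₀, hG0⟩ := hdeg
    apply iff_of_true
    · intro c hc
      apply lint_const_top (ε := 1) one_ne_zero
      intro t ht
      have htpos : 0 < t := lt_trans hc ht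
      rw [Bfun_eq_top hn hG hs₀ hG0 htpos, ENNReal.top_div_of_ne_top ENNReal.ofReal_ne_top]
      exact le_top
    · intro c hc
      rw [← top_le_iff]
      have h1 : ∫⁻ t in Ioi (max c s₀), qfun n G t = ⊤ := by
        apply lint_const_top (ε := 1) one_ne_zero
        intro t ht
        have hts₀ : s₀ ≤ t := le_of_lt (lt_of_le_of_lt (le_max_right c s₀) ht)
        have htpos : 0 < t := lt_of_lt_of_le hs₀ hts₀
        have hGt : G t = 0 := le_antisymm (hG0 ▸ hG hts₀) (zero_le)
        rw [qfun, hGt, ENNReal.zero_rpow_of_neg (by linarith),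
          ENNReal.mul_top (ofReal_rpow_pos htpos _)]
        exact le_top
      calc (⊤ : ℝ≥0∞) = ∫⁻ t in Ioi (max c s₀), qfun n G t := h1.symm
        _ ≤ ∫⁻ t in Ioi c, qfun n G t := lintegral_mono_set (Ioi_subset_Ioi (le_max_left _ _))
  · push_neg at hdeg
    have hND : ∀ s : ℝ, 0 < s → G s ≠ 0 := hdeg
    rw [E1 hn, E2 hn hG]
    rw [show (∀ c : ℝ, 0 < c →
        ∫⁻ t in Ioi c, lamf n G t * ENNReal.ofReal (t ^ (-(n : ℝ))) = ⊤) ↔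
        (∀ c : ℝ, 0 < c →
          ∫⁻ s in Ioi 0, min (ENNReal.ofReal (c ^ (1 - (n : ℝ)))) (qfun n G s) = ⊤) from ?_]
    · exact E3 hn hG
    · apply forall_congr'
      intro c
      apply imp_congr_right
      intro hc
      rw [lam_fubini hn hG hND hc]
      rw [ENNReal.mul_eq_top]
      have hκ0 : ENNReal.ofReal (1 / ((n : ℝ) - 1)) ≠ 0 := by
        simp only [ne_eq, ENNReal.ofReal_eq_zero, not_le]
        apply div_pos one_pos
        linarith
      constructor
      · rintro (⟨_, h⟩ | ⟨h, _⟩)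
        · exact h
        · exact absurd h ENNReal.ofReal_ne_top
      · intro h
        exact Or.inl ⟨hκ0, h⟩

end Main

end YSD

theorem youngShifted_divergence_iff {n : ℕ} (hn : 3 ≤ n)
    (A : ℝ → ℝ≥0∞) (hA : IsYoung A) (hT : TailCondition n A) :
    (∀ c : ℝ, 0 < c →
        ∫⁻ t in Ioi c, youngShifted n A t / ENNReal.ofReal (t ^ (n + 1)) = ∞) ↔
      ∀ c : ℝ, 0 < c →
        ∫⁻ t in Ioi c,
          ENNReal.ofReal (t ^ ((1 - (n : ℝ)) / ((n : ℝ) - 2))) *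
            (∫⁻ s in Ioi t,
                youngConj A s / ENNReal.ofReal (s ^ (1 + youngExp n))) ^ (1 - (n : ℝ))
          = ∞ := by
  set G : ℝ → ℝ≥0∞ :=
    fun u => ∫⁻ s in Ioi u, youngConj A s / ENNReal.ofReal (s ^ (1 + youngExp n)) with hGdef
  have hG : Antitone G := fun a b hab => lintegral_mono_set (Ioi_subset_Ioi hab)
  have hB : youngShifted n A = YSD.Bfun n G := by
    rw [youngShifted, if_neg (by omega)]
    rfl
  have hGt : ∀ t : ℝ,
      (∫⁻ s in Ioi t, youngConj A s / ENNReal.ofReal (s ^ (1 + youngExp n))) = G t :=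
    fun t => rfl
  have hq : ∀ t : ℝ,
      ENNReal.ofReal (t ^ ((1 - (n : ℝ)) / ((n : ℝ) - 2))) * G t ^ (1 - (n : ℝ)) =
        YSD.qfun n G t := by
    intro t
    rw [YSD.he_id2 hn]
    rfl
  simp only [hGt, hq, hB]
  exact YSD.main_iff hn hG
end
end

section
/- Let n ≥ 3 and let A be a Young function with ∫^∞ (t/A(t))^{1/(n−2)} dt < ∞. Then the function t ↦ A_{n−1}(t)/t^{n−1} is non-decreasing on (0,∞); equivalently, the function t ↦ t^{n−1} A_{n−1}(1/t) is non-increasing on (0,∞). -/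
open MeasureTheory Metric Set Filter ENNReal
open scoped Topology NNReal

noncomputable section

lemma youngShifted_scale {n : ℕ} (hn : 3 ≤ n) (A : ℝ → ℝ≥0∞) {s s' : ℝ}
    (hs : 0 < s) (hss' : s ≤ s') :
    ENNReal.ofReal ((s' / s) ^ (n - 1)) * youngShifted n A s ≤ youngShifted n A s' := by
  have hn2 : n ≠ 2 := by omega
  rw [youngShifted, if_neg hn2]
  set B : ℝ → ℝ≥0∞ := fun t =>
    ENNReal.ofReal (t ^ youngExp n) *
      ∫⁻ r in Ioi t, youngConj A r / ENNReal.ofReal (r ^ (1 + youngExp n)) with hB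
  set c := s' / s with hc
  have hc1 : (1:ℝ) ≤ c := (one_le_div hs).2 hss'
  have hc0 : (0:ℝ) ≤ c := zero_le_one.trans hc1
  set d := c ^ (n - 2) with hd
  have hd1 : (1:ℝ) ≤ d := one_le_pow₀ hc1
  have hd0 : (0:ℝ) ≤ d := zero_le_one.trans hd1
  have hne : (n:ℝ) - 2 ≠ 0 := by
    have : (3:ℝ) ≤ (n:ℝ) := by exact_mod_cast hn
    linarith
  have hdc : d * c = c ^ (n - 1) := by
    rw [hd, ← pow_succ]; congr 1; omega
  have hs' : s' = c * s := by rw [hc, div_mul_cancel₀ _ hs.ne']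
  have hde : ∀ t : ℝ, 0 ≤ t → (d * t) ^ youngExp n = c ^ (n-1) * t ^ youngExp n := by
    intro t ht
    rw [Real.mul_rpow hd0 ht, hd, ← Real.rpow_natCast c (n-2), ← Real.rpow_mul hc0]
    congr 1
    rw [← Real.rpow_natCast c (n-1)]
    congr 1
    rw [Nat.cast_sub (by omega : 2 ≤ n), Nat.cast_sub (by omega : 1 ≤ n), youngExp]
    push_cast
    field_simp
  have hBt : ∀ t : ℝ, 0 ≤ t → B (d * t) ≤ ENNReal.ofReal (c ^ (n-1)) * B t := by
    intro t ht
    rw [hB]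
    simp only
    rw [hde t ht, ENNReal.ofReal_mul (by positivity), mul_assoc]
    gcongr
    exact le_mul_of_one_le_left ht hd1
  calc ENNReal.ofReal (c ^ (n-1)) * youngConj B s
      = ⨆ t : Ici (0:ℝ), ENNReal.ofReal (c ^ (n-1)) * (ENNReal.ofReal ((t:ℝ) * s) - B t) := by
        rw [youngConj, ENNReal.mul_iSup]
    _ ≤ ⨆ t : Ici (0:ℝ), (ENNReal.ofReal ((d * (t:ℝ)) * s') - B (d * (t:ℝ))) := by
        refine iSup_mono fun t => ?_
        have h1 : ENNReal.ofReal ((d * (t:ℝ)) * s') =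
            ENNReal.ofReal (c ^ (n-1)) * ENNReal.ofReal ((t:ℝ) * s) := by
          rw [← ENNReal.ofReal_mul (by positivity)]
          congr 1
          rw [hs', ← hdc]; ring
        calc ENNReal.ofReal (c ^ (n-1)) * (ENNReal.ofReal ((t:ℝ) * s) - B t)
            = ENNReal.ofReal (c ^ (n-1)) * ENNReal.ofReal ((t:ℝ) * s)
              - ENNReal.ofReal (c ^ (n-1)) * B t :=
              ENNReal.mul_sub (fun _ _ => ENNReal.ofReal_ne_top)
          _ ≤ ENNReal.ofReal ((d * (t:ℝ)) * s') - B (d * (t:ℝ)) := by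
              rw [h1]
              exact tsub_le_tsub_left (hBt t t.2) _
    _ ≤ youngConj B s' := by
        refine iSup_le fun t => ?_
        exact le_iSup_of_le (⟨d * (t:ℝ), mul_nonneg hd0 t.2⟩ : Ici (0:ℝ)) le_rfl

theorem youngShifted_div_pow_monotone {n : ℕ} (hn : 3 ≤ n)
    (A : ℝ → ℝ≥0∞) (hA : IsYoung A) (hT : TailCondition n A) :
    MonotoneOn (fun t : ℝ => youngShifted n A t / ENNReal.ofReal (t ^ (n - 1)))
        (Ioi (0 : ℝ)) ∧
      AntitoneOn (fun t : ℝ => ENNReal.ofReal (t ^ (n - 1)) * youngShifted n A (1 / t))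
        (Ioi (0 : ℝ)) := by
  constructor
  · intro s hs s' hs' hss'
    simp only
    rw [mem_Ioi] at hs hs'
    have key := youngShifted_scale hn A hs hss'
    have hpos : ENNReal.ofReal ((s'/s) ^ (n-1)) ≠ 0 := by
      simp only [ne_eq, ENNReal.ofReal_eq_zero, not_le]
      positivity
    have hden : ENNReal.ofReal (s' ^ (n-1)) =
        ENNReal.ofReal ((s'/s) ^ (n-1)) * ENNReal.ofReal (s ^ (n-1)) := by
      rw [← ENNReal.ofReal_mul (by positivity), ← mul_pow, div_mul_cancel₀ _ hs.ne']
    rw [hden]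
    calc youngShifted n A s / ENNReal.ofReal (s ^ (n-1))
        = ENNReal.ofReal ((s'/s) ^ (n-1)) * youngShifted n A s /
            (ENNReal.ofReal ((s'/s) ^ (n-1)) * ENNReal.ofReal (s ^ (n-1))) :=
          (ENNReal.mul_div_mul_left _ _ hpos ENNReal.ofReal_ne_top).symm
      _ ≤ youngShifted n A s' /
            (ENNReal.ofReal ((s'/s) ^ (n-1)) * ENNReal.ofReal (s ^ (n-1))) :=
          ENNReal.div_le_div_right key _
  · intro t ht t' ht' htt'
    simp only
    rw [mem_Ioi] at ht ht'
    have h1t : (0:ℝ) < 1 / t' := by positivity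
    have hle : 1 / t' ≤ 1 / t := one_div_le_one_div_of_le ht htt'
    have key := youngShifted_scale hn A h1t hle
    have hq : (1/t) / (1/t') = t' / t := by
      field_simp
    rw [hq] at key
    have hpow : ENNReal.ofReal (t' ^ (n-1)) =
        ENNReal.ofReal (t ^ (n-1)) * ENNReal.ofReal ((t'/t) ^ (n-1)) := by
      rw [← ENNReal.ofReal_mul (by positivity), ← mul_pow, mul_div_cancel₀ _ ht.ne']
    rw [hpow, mul_assoc]
    exact mul_le_mul_right key _
end
end

section
/- Let n ≥ 2 and let A be a Young function; if n ≥ 3 assume that ∫^∞ (t/A(t))^{1/(n−2)} dt < ∞. If ∫_0 A_{n−1}(s) s^{−1−n} ds < ∞, then the function B(t) = tⁿ ∫_0^t A_{n−1}(s) s^{−1−n} ds, t > 0 (with B(0) = 0), is a Young function; in particular B is convex, and its right-continuous inverse B^{−1} is well defined. -/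
open MeasureTheory Metric Set Filter ENNReal
open scoped Topology NNReal

noncomputable section

/-- The function `B(t) = tⁿ ∫_0^t A_{n-1}(s) s^{-1-n} ds` (vanishing for `t ≤ 0`). -/
def modulusB (n : ℕ) (A : ℝ → ℝ≥0∞) (t : ℝ) : ℝ≥0∞ :=
  ENNReal.ofReal (t ^ n) *
    ∫⁻ s in Ioc (0 : ℝ) t, youngShifted n A s / ENNReal.ofReal (s ^ (n + 1))

-- ### auxiliary lemmas

namespace ModB

variable {A : ℝ → ℝ≥0∞}

lemma young_le_smul (hA : IsYoung A) {x y : ℝ} (hx : 0 ≤ x) (hy : 0 < y) (hxy : x ≤ y) :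
    A x ≤ ENNReal.ofReal (x / y) * A y := by
  have hl0 : 0 ≤ x / y := div_nonneg hx hy.le
  have hl1 : x / y ≤ 1 := (div_le_one hy).2 hxy
  have h := hA.2.1 hy.le le_rfl hl0 hl1 (y := 0)
  rw [mul_zero, div_mul_cancel₀ _ hy.ne', add_zero, hA.1, mul_zero, add_zero] at h
  exact h

lemma young_mono (hA : IsYoung A) {x y : ℝ} (hx : 0 ≤ x) (hxy : x ≤ y) : A x ≤ A y := by
  rcases eq_or_lt_of_le (hx.trans hxy) with hy | hy
  · have : x = 0 := le_antisymm (hxy.trans hy.symm.le) hx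
    rw [this, ← hy]
  · calc A x ≤ ENNReal.ofReal (x / y) * A y := young_le_smul hA hx hy hxy
    _ ≤ 1 * A y := by
        exact mul_le_mul_left (ENNReal.ofReal_le_one.2 ((div_le_one hy).2 hxy)) _
    _ = A y := one_mul _

/-- slope function -/
lemma gslope_mono (hA : IsYoung A) :
    Monotone (fun s : ℝ => if s ≤ 0 then 0 else A s / ENNReal.ofReal s) := by
  intro x y hxy
  dsimp only
  by_cases hx : x ≤ 0
  · simp [hx]
  · rw [if_neg hx, if_neg (by linarith [not_le.1 hx] : ¬ y ≤ 0)]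
    push_neg at hx
    have hy : 0 < y := lt_of_lt_of_le hx hxy
    have h1 : A x / ENNReal.ofReal x ≤ ENNReal.ofReal (x / y) * A y / ENNReal.ofReal x :=
      ENNReal.div_le_div_right (young_le_smul hA hx.le hy hxy) _
    refine h1.trans (le_of_eq ?_)
    rw [ENNReal.ofReal_div_of_pos hy]
    have hx0 : ENNReal.ofReal x ≠ 0 := (ENNReal.ofReal_pos.2 hx).ne'
    have hxt : ENNReal.ofReal x ≠ ∞ := ENNReal.ofReal_ne_top
    rw [div_eq_mul_inv, div_eq_mul_inv, div_eq_mul_inv]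
    calc ENNReal.ofReal x * (ENNReal.ofReal y)⁻¹ * A y * (ENNReal.ofReal x)⁻¹
        = (ENNReal.ofReal x * (ENNReal.ofReal x)⁻¹) * (A y * (ENNReal.ofReal y)⁻¹) := by ring
      _ = A y * (ENNReal.ofReal y)⁻¹ := by rw [ENNReal.mul_inv_cancel hx0 hxt, one_mul]

lemma youngConj_mono (F : ℝ → ℝ≥0∞) : Monotone (youngConj F) := by
  intro x y hxy
  refine iSup_mono fun s => tsub_le_tsub_right (ENNReal.ofReal_le_ofReal ?_) _
  exact mul_le_mul_of_nonneg_left hxy s.2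

lemma youngConj_convex (F : ℝ → ℝ≥0∞) ⦃x y : ℝ⦄ (hx : 0 ≤ x) (hy : 0 ≤ y)
    ⦃l : ℝ⦄ (hl0 : 0 ≤ l) (hl1 : l ≤ 1) :
    youngConj F (l * x + (1 - l) * y) ≤
      ENNReal.ofReal l * youngConj F x + ENNReal.ofReal (1 - l) * youngConj F y := by
  have hl1' : 0 ≤ 1 - l := by linarith
  refine iSup_le fun s => ?_
  have hs : (0:ℝ) ≤ s := s.2
  have key : ENNReal.ofReal ((s : ℝ) * (l * x + (1 - l) * y)) - F s ≤
      ENNReal.ofReal l * (ENNReal.ofReal ((s : ℝ) * x) - F s) +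
      ENNReal.ofReal (1 - l) * (ENNReal.ofReal ((s : ℝ) * y) - F s) := by
    have e1 : (s : ℝ) * (l * x + (1 - l) * y) = l * ((s:ℝ) * x) + (1 - l) * ((s:ℝ) * y) := by
      ring
    have e2 : ENNReal.ofReal ((s : ℝ) * (l * x + (1 - l) * y)) =
        ENNReal.ofReal l * ENNReal.ofReal ((s:ℝ) * x) +
        ENNReal.ofReal (1 - l) * ENNReal.ofReal ((s:ℝ) * y) := by
      rw [e1, ENNReal.ofReal_add (mul_nonneg hl0 (mul_nonneg hs hx))
        (mul_nonneg hl1' (mul_nonneg hs hy)), ENNReal.ofReal_mul hl0,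
        ENNReal.ofReal_mul hl1']
    have e3 : F (s : ℝ) = ENNReal.ofReal l * F s + ENNReal.ofReal (1 - l) * F s := by
      rw [← add_mul, ← ENNReal.ofReal_add hl0 hl1']
      norm_num
    have hmd : ∀ c a b : ℝ≥0∞, c * a - c * b ≤ c * (a - b) := by
      intro c a b
      refine tsub_le_iff_right.2 ?_
      rw [← mul_add]
      exact mul_le_mul_right le_tsub_add _
    calc ENNReal.ofReal ((s : ℝ) * (l * x + (1 - l) * y)) - F s
        = (ENNReal.ofReal l * ENNReal.ofReal ((s:ℝ) * x) +
            ENNReal.ofReal (1 - l) * ENNReal.ofReal ((s:ℝ) * y)) -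
          (ENNReal.ofReal l * F s + ENNReal.ofReal (1 - l) * F s) := by rw [e2, ← e3]
      _ ≤ (ENNReal.ofReal l * ENNReal.ofReal ((s:ℝ) * x) - ENNReal.ofReal l * F s) +
          (ENNReal.ofReal (1 - l) * ENNReal.ofReal ((s:ℝ) * y) - ENNReal.ofReal (1 - l) * F s) :=
          add_tsub_add_le_tsub_add_tsub
      _ ≤ ENNReal.ofReal l * (ENNReal.ofReal ((s:ℝ) * x) - F s) +
          ENNReal.ofReal (1 - l) * (ENNReal.ofReal ((s:ℝ) * y) - F s) :=
          add_le_add (hmd _ _ _) (hmd _ _ _)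
  refine key.trans (add_le_add (mul_le_mul_right ?_ _) (mul_le_mul_right ?_ _)) <;>
    exact le_iSup (fun s : Ici (0:ℝ) => ENNReal.ofReal ((s : ℝ) * _) - F s) s

lemma tail_finite {n : ℕ} (hn : 3 ≤ n) (hA : IsYoung A) (hT : TailCondition n A) :
    ∫⁻ r in Ioi (1:ℝ), youngConj A r / ENNReal.ofReal (r ^ (1 + youngExp n)) < ∞ := by
  obtain ⟨t₀, ht₀, htail⟩ := hT
  set e : ℝ := youngExp n with he
  have hn2 : (1:ℝ) ≤ (n:ℝ) - 2 := by
    have : (3:ℝ) ≤ (n:ℝ) := by exact_mod_cast hn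
    linarith
  have hn2pos : (0:ℝ) < (n:ℝ) - 2 := by linarith
  have he1 : 1 < e := by
    rw [he, youngExp]
    rw [lt_div_iff₀ hn2pos]
    linarith
  have hpe : (1:ℝ) / ((n:ℝ) - 2) = e - 1 := by
    rw [he, youngExp, div_sub_one hn2pos.ne']
    congr 1
    ring
  set p : ℝ := 1 / ((n:ℝ) - 2) with hp
  have hppos : 0 < p := by rw [hp]; positivity
  -- the slope function
  set g : ℝ → ℝ≥0∞ := fun s => if s ≤ 0 then 0 else A s / ENNReal.ofReal s with hg
  have hgmono : Monotone g := gslope_mono hA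
  have hgmeas : Measurable g := hgmono.measurable
  -- the bad set
  set E : ℝ → Set ℝ := fun r => {s : ℝ | 0 < s ∧ g s < ENNReal.ofReal r} with hE
  have hEmeas : ∀ r, MeasurableSet (E r) := fun r =>
    measurableSet_Ioi.inter (hgmeas measurableSet_Iio)
  -- Step A: pointwise bound on the conjugate
  have stepA : ∀ r : ℝ, 0 < r → youngConj A r ≤ ENNReal.ofReal r * volume (E r) := by
    intro r hr
    refine iSup_le fun s => ?_
    have hs : (0:ℝ) ≤ s := s.2
    by_cases hcase : A s < ENNReal.ofReal ((s:ℝ) * r)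
    · have hspos : 0 < (s:ℝ) := by
        rcases hs.lt_or_eq with h | h
        · exact h
        · exfalso; rw [← h] at hcase; simp [hA.1] at hcase
      have hgs : g (s:ℝ) < ENNReal.ofReal r := by
        rw [hg]; dsimp only
        rw [if_neg (not_le.2 hspos)]
        rw [ENNReal.div_lt_iff (Or.inl (ENNReal.ofReal_pos.2 hspos).ne')
          (Or.inl ENNReal.ofReal_ne_top)]
        rw [← ENNReal.ofReal_mul hr.le, mul_comm]
        exact hcase
      have hsub : Ioo 0 (s:ℝ) ⊆ E r := by
        intro s' hs'
        exact ⟨hs'.1, lt_of_le_of_lt (hgmono hs'.2.le) hgs⟩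
      calc ENNReal.ofReal ((s:ℝ) * r) - A s ≤ ENNReal.ofReal ((s:ℝ) * r) := tsub_le_self
        _ = ENNReal.ofReal r * ENNReal.ofReal (s:ℝ) := by
            rw [← ENNReal.ofReal_mul hr.le, mul_comm]
        _ ≤ ENNReal.ofReal r * volume (E r) := by
            refine mul_le_mul_right ?_ _
            have : volume (Ioo (0:ℝ) s) = ENNReal.ofReal (s:ℝ) := by
              rw [Real.volume_Ioo, sub_zero]
            rw [← this]
            exact measure_mono hsub
    · push_neg at hcase
      rw [tsub_eq_zero_of_le hcase]
      exact zero_le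
  -- the product-space kernel
  set D : Set (ℝ × ℝ) := {q : ℝ × ℝ | 0 < q.1 ∧ 1 < q.2 ∧ g q.1 < ENNReal.ofReal q.2} with hD
  have hDmeas : MeasurableSet D := by
    refine MeasurableSet.inter (measurable_fst measurableSet_Ioi) ?_
    refine MeasurableSet.inter (measurable_snd measurableSet_Ioi) ?_
    exact measurableSet_lt (α := ℝ≥0∞) (hgmeas.comp measurable_fst)
      (ENNReal.measurable_ofReal.comp measurable_snd)
  set k : ℝ × ℝ → ℝ≥0∞ := D.indicator (fun q => ENNReal.ofReal (q.2 ^ (-e))) with hk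
  have hkmeas : Measurable k := by
    refine Measurable.indicator ?_ hDmeas
    measurability
  -- value of the inner integral
  have Vlem : ∀ a : ℝ, 1 ≤ a →
      (∫⁻ r in Ioi a, ENNReal.ofReal (r ^ (-e))) =
        ENNReal.ofReal (a ^ (1 - e) * (e - 1)⁻¹) := by
    intro a ha
    have hapos : 0 < a := lt_of_lt_of_le one_pos ha
    have hlt : -e < -1 := by linarith
    have hint : IntegrableOn (fun r : ℝ => r ^ (-e)) (Ioi a) := by
      exact integrableOn_Ioi_rpow_of_lt hlt hapos
    rw [← ofReal_integral_eq_lintegral_ofReal hint ?nn]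
    case nn =>
      filter_upwards [ae_restrict_mem measurableSet_Ioi] with r hr
      exact Real.rpow_nonneg (le_of_lt (lt_trans hapos hr)) _
    congr 1
    rw [integral_Ioi_rpow_of_lt hlt hapos]
    rw [show -e + 1 = 1 - e by ring, show (1:ℝ) - e = -(e-1) by ring]
    rw [div_neg, neg_div, neg_neg, div_eq_mul_inv]
  -- inner integral bound
  set T : ℝ := max t₀ 1 with hTdef
  have hT1 : (1:ℝ) ≤ T := le_max_right _ _
  have hTt₀ : t₀ ≤ T := le_max_left _ _
  set C : ℝ≥0∞ := ENNReal.ofReal ((e - 1)⁻¹) with hC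
  set bound : ℝ → ℝ≥0∞ := fun s =>
    (Ioc (0:ℝ) T).indicator (fun _ => C) s +
    (Ioi T).indicator (fun s' => C * ((g s')⁻¹) ^ p) s with hbound
  have inner_le : ∀ s : ℝ, (∫⁻ r, k (s, r)) ≤ bound s := by
    intro s
    by_cases hs : 0 < s
    swap
    · have hz : ∀ r : ℝ, k (s, r) = 0 := by
        intro r
        rw [hk, indicator_of_notMem]
        exact fun h => hs h.1
      simp [hz]
    by_cases hginf : g s = ∞
    · have hz : ∀ r : ℝ, k (s, r) = 0 := by
        intro r
        rw [hk, indicator_of_notMem]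
        intro h
        have h3 : g s < ENNReal.ofReal r := h.2.2
        rw [hginf] at h3
        exact not_top_lt h3
      simp [hz]
    set a : ℝ := max 1 (g s).toReal with ha
    have ha1 : 1 ≤ a := le_max_left _ _
    have hk_le : ∀ r : ℝ, k (s, r) ≤ (Ioi a).indicator (fun r' => ENNReal.ofReal (r' ^ (-e))) r := by
      intro r
      rw [hk]
      by_cases hmem : (s, r) ∈ D
      · have hr1 : 1 < r := hmem.2.1
        have hgr : g s < ENNReal.ofReal r := hmem.2.2
        have hra : a < r := max_lt hr1 (ENNReal.toReal_lt_of_lt_ofReal hgr)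
        rw [indicator_of_mem hmem, indicator_of_mem (show r ∈ Ioi a from hra)]
      · rw [indicator_of_notMem hmem]
        exact zero_le
    have h1 : (∫⁻ r, k (s, r)) ≤ ENNReal.ofReal (a ^ (1 - e) * (e - 1)⁻¹) := by
      refine (lintegral_mono hk_le).trans (le_of_eq ?_)
      rw [lintegral_indicator measurableSet_Ioi, Vlem a ha1]
    refine h1.trans ?_
    by_cases hsT : s ≤ T
    · have hle : C ≤ bound s := by
        rw [hbound]
        dsimp only
        have hmem : s ∈ Ioc (0:ℝ) T := ⟨hs, hsT⟩
        rw [Set.indicator_of_mem (s := Ioc (0:ℝ) T) hmem]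
        exact le_self_add
      refine le_trans ?_ hle
      rw [hC]
      apply ENNReal.ofReal_le_ofReal
      have h2 : a ^ (1 - e) ≤ 1 :=
        Real.rpow_le_one_of_one_le_of_nonpos ha1 (by linarith)
      calc a ^ (1-e) * (e-1)⁻¹ ≤ 1 * (e-1)⁻¹ :=
            mul_le_mul_of_nonneg_right h2 (inv_nonneg.2 (by linarith))
        _ = (e-1)⁻¹ := one_mul _
    · push_neg at hsT
      have hle : C * ((g s)⁻¹) ^ p ≤ bound s := by
        have hmem : s ∈ Ioi T := hsT
        rw [hbound]
        dsimp only
        rw [Set.indicator_of_mem (s := Ioi T) hmem]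
        exact le_add_self
      refine le_trans ?_ hle
      rw [ENNReal.ofReal_mul (Real.rpow_nonneg (by linarith : (0:ℝ) ≤ a) _), mul_comm]
      refine mul_le_mul_right ?_ _
      rw [← ENNReal.ofReal_rpow_of_pos (by linarith : (0:ℝ) < a)]
      have hga : g s ≤ ENNReal.ofReal a :=
        calc g s = ENNReal.ofReal (g s).toReal := (ENNReal.ofReal_toReal hginf).symm
          _ ≤ ENNReal.ofReal a := ENNReal.ofReal_le_ofReal (le_max_right _ _)
      rw [ENNReal.inv_rpow, show (1:ℝ) - e = -p by rw [hpe]; ring, ENNReal.rpow_neg]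
      exact ENNReal.inv_le_inv.2 (ENNReal.rpow_le_rpow hga hppos.le)
  have htotal : (∫⁻ s, bound s) < ∞ := by
    rw [hbound]
    dsimp only
    rw [lintegral_add_left (measurable_const.indicator measurableSet_Ioc)]
    refine ENNReal.add_lt_top.2 ⟨?_, ?_⟩
    · rw [lintegral_indicator measurableSet_Ioc, setLIntegral_const]
      exact ENNReal.mul_lt_top ENNReal.ofReal_lt_top
        (by rw [Real.volume_Ioc]; exact ENNReal.ofReal_lt_top)
    · rw [lintegral_indicator measurableSet_Ioi]
      have congrlem : ∫⁻ s in Ioi T, C * ((g s)⁻¹) ^ p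
          = ∫⁻ s in Ioi T, C * (ENNReal.ofReal s / A s) ^ p := by
        refine setLIntegral_congr_fun measurableSet_Ioi (fun s hsT => ?_)
        have hs : 0 < s := lt_trans (lt_of_lt_of_le one_pos hT1) hsT
        have : (g s)⁻¹ = ENNReal.ofReal s / A s := by
          rw [hg]
          dsimp only
          rw [if_neg (not_le.2 hs),
            ENNReal.inv_div (Or.inl ENNReal.ofReal_ne_top)
              (Or.inl (ENNReal.ofReal_pos.2 hs).ne')]
        rw [this]
      rw [congrlem, lintegral_const_mul' _ _ ENNReal.ofReal_ne_top]
      refine ENNReal.mul_lt_top ENNReal.ofReal_lt_top ?_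
      refine lt_of_le_of_lt ?_ htail
      exact lintegral_mono' (Measure.restrict_mono (Ioi_subset_Ioi hTt₀) le_rfl) le_rfl
  calc ∫⁻ r in Ioi (1:ℝ), youngConj A r / ENNReal.ofReal (r ^ (1 + e))
      ≤ ∫⁻ r in Ioi (1:ℝ), (∫⁻ s, k (s, r)) := by
        refine lintegral_mono_ae ?_
        filter_upwards [ae_restrict_mem measurableSet_Ioi] with r hr
        have hr0 : (0:ℝ) < r := lt_trans one_pos hr
        have e1 : ∫⁻ s, k (s, r) = ENNReal.ofReal (r ^ (-e)) * volume (E r) := by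
          have hpt : ∀ s : ℝ, k (s, r)
              = (E r).indicator (fun _ => ENNReal.ofReal (r ^ (-e))) s := by
            intro s
            rw [hk]
            by_cases hmem : s ∈ E r
            · rw [indicator_of_mem (show (s,r) ∈ D from ⟨hmem.1, hr, hmem.2⟩),
                indicator_of_mem hmem]
            · rw [indicator_of_notMem, indicator_of_notMem hmem]
              exact fun h => hmem ⟨h.1, h.2.2⟩
          rw [lintegral_congr hpt, lintegral_indicator (hEmeas r), setLIntegral_const]
        rw [e1]
        refine (ENNReal.div_le_div_right (stepA r hr0) _).trans (le_of_eq ?_)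
        have e2 : ENNReal.ofReal r / ENNReal.ofReal (r ^ (1 + e)) = ENNReal.ofReal (r ^ (-e)) := by
          rw [← ENNReal.ofReal_div_of_pos (Real.rpow_pos_of_pos hr0 _)]
          congr 1
          rw [Real.rpow_add hr0, Real.rpow_one, Real.rpow_neg hr0.le]
          field_simp
        rw [div_eq_mul_inv] at e2 ⊢
        calc ENNReal.ofReal r * volume (E r) * (ENNReal.ofReal (r ^ (1 + e)))⁻¹
            = ENNReal.ofReal r * (ENNReal.ofReal (r ^ (1 + e)))⁻¹ * volume (E r) := by ring
          _ = ENNReal.ofReal (r ^ (-e)) * volume (E r) := by rw [e2]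
    _ ≤ ∫⁻ r, (∫⁻ s, k (s, r)) := lintegral_mono' Measure.restrict_le_self le_rfl
    _ = ∫⁻ s, (∫⁻ r, k (s, r)) :=
        lintegral_lintegral_swap ((hkmeas.comp measurable_swap).aemeasurable)
    _ ≤ ∫⁻ s, bound s := lintegral_mono inner_le
    _ < ∞ := htotal

lemma shifted_zero {n : ℕ} (hA : IsYoung A) : youngShifted n A 0 = 0 := by
  rw [youngShifted]
  by_cases h2 : n = 2
  · rw [if_pos h2]; exact hA.1
  · rw [if_neg h2]
    refine le_antisymm (iSup_le fun s => ?_) (zero_le)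
    rw [mul_zero, ENNReal.ofReal_zero, zero_tsub]

lemma shifted_mono {n : ℕ} (hA : IsYoung A) {x y : ℝ} (hx : 0 ≤ x) (hxy : x ≤ y) :
    youngShifted n A x ≤ youngShifted n A y := by
  rw [youngShifted]
  by_cases h2 : n = 2
  · rw [if_pos h2]; exact young_mono hA hx hxy
  · rw [if_neg h2]; exact youngConj_mono _ hxy

lemma shifted_convex {n : ℕ} (hA : IsYoung A) ⦃x y : ℝ⦄ (hx : 0 ≤ x) (hy : 0 ≤ y)
    ⦃l : ℝ⦄ (hl0 : 0 ≤ l) (hl1 : l ≤ 1) :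
    youngShifted n A (l * x + (1 - l) * y) ≤
      ENNReal.ofReal l * youngShifted n A x + ENNReal.ofReal (1 - l) * youngShifted n A y := by
  rw [youngShifted]
  by_cases h2 : n = 2
  · rw [if_pos h2]; exact hA.2.1 hx hy hl0 hl1
  · rw [if_neg h2]; exact youngConj_convex _ hx hy hl0 hl1

lemma shifted_pos {n : ℕ} (hn : 2 ≤ n) (hA : IsYoung A) (hT : 3 ≤ n → TailCondition n A) :
    ∃ s₀ : ℝ, 0 < s₀ ∧ youngShifted n A s₀ ≠ 0 := by
  by_cases h2 : n = 2
  · obtain ⟨x, y, hx, hy, hxy⟩ := hA.2.2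
    by_cases hax : A x = 0
    · refine ⟨y, hy, ?_⟩
      rw [youngShifted, if_pos h2]
      intro h; exact hxy (by rw [hax, h])
    · refine ⟨x, hx, ?_⟩
      rw [youngShifted, if_pos h2]
      exact hax
  · have hn3 : 3 ≤ n := by omega
    by_contra hcon
    push_neg at hcon
    set F : ℝ → ℝ≥0∞ := fun t => ENNReal.ofReal (t ^ youngExp n) *
      ∫⁻ r in Ioi t, youngConj A r / ENNReal.ofReal (r ^ (1 + youngExp n)) with hF
    have hFt : ∀ t : ℝ, 0 < t → ENNReal.ofReal t ≤ F 1 := by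
      intro t ht
      have h := hcon t ht
      rw [youngShifted, if_neg h2, youngConj] at h
      have h1 : ENNReal.ofReal ((1:ℝ) * t) - F 1 = 0 := by
        refine le_antisymm ?_ (zero_le)
        rw [← h]
        exact le_iSup (fun s : Ici (0:ℝ) => ENNReal.ofReal ((s:ℝ) * t) - F (s:ℝ))
          ⟨1, by norm_num⟩
      rw [one_mul] at h1
      exact tsub_eq_zero_iff_le.1 h1
    have hFtop : F 1 = ∞ := by
      by_contra hne
      have hle := hFt ((F 1).toReal + 1) (by positivity)
      nth_rewrite 2 [← ENNReal.ofReal_toReal hne] at hle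
      have h2' := ENNReal.toReal_mono ENNReal.ofReal_ne_top hle
      rw [ENNReal.toReal_ofReal (by positivity),
        ENNReal.toReal_ofReal ENNReal.toReal_nonneg] at h2'
      linarith
    have hfin := tail_finite hn3 hA (hT hn3)
    simp only [hF, Real.one_rpow, ENNReal.ofReal_one, one_mul] at hFtop
    rw [hFtop] at hfin
    exact absurd hfin (lt_irrefl _)

lemma cov_scale (f : ℝ → ℝ≥0∞) (hf : Measurable f) {t : ℝ} (ht : 0 < t) :
    ∫⁻ s in Ioc (0:ℝ) t, f s = ENNReal.ofReal t * ∫⁻ u in Ioc (0:ℝ) 1, f (t * u) := by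
  set g : ℝ → ℝ≥0∞ := (Ioc (0:ℝ) t).indicator f with hg
  have hgm : Measurable g := hf.indicator measurableSet_Ioc
  have hmap : ∫⁻ x, g x ∂(Measure.map (fun x : ℝ => t * x) volume) = ∫⁻ u, g (t * u) :=
    lintegral_map hgm (measurable_const_mul t)
  rw [Real.map_volume_mul_left (ne_of_gt ht), lintegral_smul_measure, smul_eq_mul] at hmap
  have habs : |t⁻¹| = t⁻¹ := abs_of_pos (inv_pos.2 ht)
  have hind : ∀ u : ℝ, g (t * u) = (Ioc (0:ℝ) 1).indicator (fun u' => f (t * u')) u := by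
    intro u
    rw [hg]
    by_cases hu : u ∈ Ioc (0:ℝ) 1
    · have hmem : t * u ∈ Ioc 0 t := ⟨mul_pos ht hu.1, mul_le_of_le_one_right ht.le hu.2⟩
      rw [Set.indicator_of_mem (s := Ioc (0:ℝ) 1) hu,
        Set.indicator_of_mem (s := Ioc (0:ℝ) t) hmem]
    · have hmem : t * u ∉ Ioc 0 t := by
        intro hmem
        refine hu ⟨?_, ?_⟩
        · rcases mul_pos_iff.1 hmem.1 with h | h
          · exact h.2
          · linarith [h.1]
        · have : t * u ≤ t * 1 := by rw [mul_one]; exact hmem.2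
          exact le_of_mul_le_mul_left this ht
      rw [Set.indicator_of_notMem (s := Ioc (0:ℝ) 1) hu,
        Set.indicator_of_notMem (s := Ioc (0:ℝ) t) hmem]
  have key : ∫⁻ u, g (t * u) = ∫⁻ u in Ioc (0:ℝ) 1, f (t * u) := by
    rw [lintegral_congr hind, lintegral_indicator measurableSet_Ioc]
  have hone : ENNReal.ofReal t * ENNReal.ofReal t⁻¹ = 1 := by
    rw [← ENNReal.ofReal_mul ht.le, mul_inv_cancel₀ (ne_of_gt ht), ENNReal.ofReal_one]
  rw [← lintegral_indicator measurableSet_Ioc f, ← hg, ← key, ← hmap, habs, ← mul_assoc,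
    hone, one_mul]

/-- `youngShifted` extended by zero to the negative axis. -/
def Gext (n : ℕ) (A : ℝ → ℝ≥0∞) : ℝ → ℝ≥0∞ := fun s =>
  if s < 0 then 0 else youngShifted n A s

lemma Gext_mono {n : ℕ} (hA : IsYoung A) : Monotone (Gext n A) := by
  intro x y hxy
  simp only [Gext]
  by_cases hx : x < 0
  · rw [if_pos hx]; exact zero_le
  · push_neg at hx
    rw [if_neg (not_lt.2 hx), if_neg (not_lt.2 (hx.trans hxy))]
    exact shifted_mono hA hx hxy

lemma Gext_eq {n : ℕ} {s : ℝ} (hs : 0 ≤ s) : Gext n A s = youngShifted n A s := by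
  rw [Gext, if_neg (not_lt.2 hs)]

lemma Brep {n : ℕ} (hn : 2 ≤ n) (hA : IsYoung A) {t : ℝ} (ht : 0 ≤ t) :
    modulusB n A t =
      ∫⁻ u in Ioc (0:ℝ) 1, Gext n A (t * u) / ENNReal.ofReal (u ^ (n + 1)) := by
  rcases ht.lt_or_eq with ht | ht
  · have hf : Measurable (fun s => Gext n A s / ENNReal.ofReal (s ^ (n+1))) :=
      (Gext_mono hA).measurable.div
        (ENNReal.measurable_ofReal.comp (measurable_id.pow_const (n+1)))
    have step0 : modulusB n A t = ENNReal.ofReal (t^n) *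
        ∫⁻ s in Ioc (0:ℝ) t, Gext n A s / ENNReal.ofReal (s^(n+1)) := by
      rw [modulusB]
      congr 1
      refine setLIntegral_congr_fun measurableSet_Ioc (fun s hs => ?_)
      rw [Gext_eq hs.1.le]
    rw [step0, cov_scale _ hf ht, ← mul_assoc,
      ← ENNReal.ofReal_mul (pow_nonneg ht.le n), ← pow_succ,
      ← lintegral_const_mul' _ _ ENNReal.ofReal_ne_top]
    refine setLIntegral_congr_fun measurableSet_Ioc (fun u hu => ?_)
    have hc0 : ENNReal.ofReal (t ^ (n+1)) ≠ 0 := (ENNReal.ofReal_pos.2 (pow_pos ht _)).ne'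
    rw [mul_pow, ENNReal.ofReal_mul (pow_nonneg ht.le _), div_eq_mul_inv, div_eq_mul_inv,
      ENNReal.mul_inv (Or.inl hc0) (Or.inl ENNReal.ofReal_ne_top)]
    calc ENNReal.ofReal (t^(n+1)) * (Gext n A (t*u) *
            ((ENNReal.ofReal (t^(n+1)))⁻¹ * (ENNReal.ofReal (u^(n+1)))⁻¹))
        = (ENNReal.ofReal (t^(n+1)) * (ENNReal.ofReal (t^(n+1)))⁻¹) *
            (Gext n A (t*u) * (ENNReal.ofReal (u^(n+1)))⁻¹) := by ring
      _ = Gext n A (t*u) * (ENNReal.ofReal (u^(n+1)))⁻¹ := by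
          rw [ENNReal.mul_inv_cancel hc0 ENNReal.ofReal_ne_top, one_mul]
  · rw [← ht]
    have hrhs : ∀ u : ℝ, u ∈ Ioc (0:ℝ) 1 →
        Gext n A (0 * u) / ENNReal.ofReal (u ^ (n + 1)) = 0 := by
      intro u _
      rw [zero_mul, Gext_eq le_rfl, shifted_zero hA, ENNReal.zero_div]
    rw [setLIntegral_congr_fun measurableSet_Ioc hrhs]
    rw [modulusB, zero_pow (by omega : n ≠ 0), ENNReal.ofReal_zero, zero_mul,
      lintegral_zero]

end ModB

open ModB

theorem modulusB_isYoung {n : ℕ} (hn : 2 ≤ n)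
    (A : ℝ → ℝ≥0∞) (hA : IsYoung A) (hT : 3 ≤ n → TailCondition n A)
    (hzero : ∃ ε : ℝ, 0 < ε ∧
      ∫⁻ t in Ioc (0 : ℝ) ε, youngShifted n A t / ENNReal.ofReal (t ^ (n + 1)) < ∞) :
    IsYoung (modulusB n A) := by
  refine ⟨?_, ?_, ?_⟩
  · rw [modulusB, zero_pow (by omega : n ≠ 0), ENNReal.ofReal_zero, zero_mul]
  · intro x y hx hy l hl0 hl1
    have hl1' : (0:ℝ) ≤ 1 - l := by linarith
    have hz : 0 ≤ l * x + (1 - l) * y :=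
      add_nonneg (mul_nonneg hl0 hx) (mul_nonneg hl1' hy)
    rw [Brep hn hA hz, Brep hn hA hx, Brep hn hA hy]
    have hmx : Measurable (fun u : ℝ =>
        ENNReal.ofReal l * (Gext n A (x * u) / ENNReal.ofReal (u ^ (n+1)))) := by
      refine Measurable.const_mul (Measurable.div ?_ ?_) _
      · exact (Gext_mono hA).measurable.comp (measurable_const_mul x)
      · exact ENNReal.measurable_ofReal.comp (measurable_id.pow_const (n+1))
    calc ∫⁻ u in Ioc (0:ℝ) 1, Gext n A ((l * x + (1 - l) * y) * u) /
            ENNReal.ofReal (u ^ (n+1))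
        ≤ ∫⁻ u in Ioc (0:ℝ) 1,
            (ENNReal.ofReal l * (Gext n A (x * u) / ENNReal.ofReal (u ^ (n+1))) +
             ENNReal.ofReal (1 - l) * (Gext n A (y * u) / ENNReal.ofReal (u ^ (n+1)))) := by
          refine lintegral_mono_ae ?_
          filter_upwards [ae_restrict_mem measurableSet_Ioc] with u hu
          have hu0 : (0:ℝ) ≤ u := hu.1.le
          have e1 : (l * x + (1 - l) * y) * u = l * (x * u) + (1 - l) * (y * u) := by ring
          rw [Gext_eq (mul_nonneg hz hu0), Gext_eq (mul_nonneg hx hu0),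
            Gext_eq (mul_nonneg hy hu0), e1]
          have h := shifted_convex (n := n) hA (mul_nonneg hx hu0) (mul_nonneg hy hu0)
            hl0 hl1
          calc youngShifted n A (l * (x * u) + (1 - l) * (y * u)) /
                ENNReal.ofReal (u ^ (n+1))
              ≤ (ENNReal.ofReal l * youngShifted n A (x * u) +
                 ENNReal.ofReal (1 - l) * youngShifted n A (y * u)) /
                ENNReal.ofReal (u ^ (n+1)) := ENNReal.div_le_div h le_rfl
            _ = _ := by
                rw [ENNReal.add_div, mul_div_assoc, mul_div_assoc]
      _ = _ := by
          rw [lintegral_add_left hmx, lintegral_const_mul' _ _ ENNReal.ofReal_ne_top,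
            lintegral_const_mul' _ _ ENNReal.ofReal_ne_top]
  · obtain ⟨s₀, hs₀, hGs₀⟩ := shifted_pos hn hA hT
    obtain ⟨ε, hε, hCε⟩ := hzero
    set Cε := ∫⁻ t in Ioc (0:ℝ) ε, youngShifted n A t / ENNReal.ofReal (t ^ (n + 1))
      with hCdef
    set t₂ : ℝ := 2 * s₀ with ht₂
    have ht₂pos : 0 < t₂ := by rw [ht₂]; linarith
    have hBpos : 0 < modulusB n A t₂ := by
      have hpt : ∀ s ∈ Ioc s₀ t₂,
          youngShifted n A s₀ / ENNReal.ofReal (t₂ ^ (n+1)) ≤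
            youngShifted n A s / ENNReal.ofReal (s ^ (n+1)) := by
        intro s hs
        exact ENNReal.div_le_div (shifted_mono hA hs₀.le hs.1.le)
          (ENNReal.ofReal_le_ofReal (pow_le_pow_left₀ (le_of_lt (hs₀.trans hs.1)) hs.2 _))
      have h1 : (0:ℝ≥0∞) <
          (youngShifted n A s₀ / ENNReal.ofReal (t₂ ^ (n+1))) * volume (Ioc s₀ t₂) := by
        refine ENNReal.mul_pos ?_ ?_
        · exact (ENNReal.div_pos hGs₀ ENNReal.ofReal_ne_top).ne'
        · rw [Real.volume_Ioc]
          refine (ENNReal.ofReal_pos.2 ?_).ne'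
          rw [ht₂]; linarith
      have h2 : (youngShifted n A s₀ / ENNReal.ofReal (t₂ ^ (n+1))) * volume (Ioc s₀ t₂)
          ≤ ∫⁻ s in Ioc (0:ℝ) t₂, youngShifted n A s / ENNReal.ofReal (s ^ (n+1)) := by
        calc (youngShifted n A s₀ / ENNReal.ofReal (t₂ ^ (n+1))) * volume (Ioc s₀ t₂)
            = ∫⁻ _ in Ioc s₀ t₂, youngShifted n A s₀ / ENNReal.ofReal (t₂ ^ (n+1)) :=
              (setLIntegral_const _ _).symm
          _ ≤ ∫⁻ s in Ioc s₀ t₂, youngShifted n A s / ENNReal.ofReal (s ^ (n+1)) := by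
              refine lintegral_mono_ae ?_
              filter_upwards [ae_restrict_mem measurableSet_Ioc] with s hs
              exact hpt s hs
          _ ≤ _ := lintegral_mono' (Measure.restrict_mono
              (Ioc_subset_Ioc (le_of_lt hs₀) le_rfl) le_rfl) le_rfl
      rw [modulusB]
      exact ENNReal.mul_pos (ENNReal.ofReal_pos.2 (pow_pos ht₂pos n)).ne'
        (lt_of_lt_of_le h1 h2).ne'
    have hsmall : ∀ x : ℝ, 0 < x → x ≤ ε →
        modulusB n A x ≤ ENNReal.ofReal (x ^ n) * Cε := by
      intro x _ hxε
      rw [modulusB]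
      exact mul_le_mul_right (lintegral_mono' (Measure.restrict_mono
        (Ioc_subset_Ioc le_rfl hxε) le_rfl) le_rfl) _
    by_cases hfin : modulusB n A t₂ = ∞
    · refine ⟨ε, t₂, hε, ht₂pos, ?_⟩
      have : modulusB n A ε < ∞ := lt_of_le_of_lt (hsmall ε hε le_rfl)
        (ENNReal.mul_lt_top ENNReal.ofReal_lt_top hCε)
      exact (this.trans_eq hfin.symm).ne
    · by_cases hCz : Cε = 0
      · refine ⟨ε, t₂, hε, ht₂pos, ?_⟩
        have hBε : modulusB n A ε = 0 := by
          have := hsmall ε hε le_rfl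
          rw [hCz, mul_zero] at this
          exact le_antisymm this (zero_le)
        rw [hBε]
        exact fun h => hBpos.ne' h.symm
      · set β : ℝ≥0∞ := modulusB n A t₂ / Cε with hβ
        have hβ0 : β ≠ 0 := (ENNReal.div_pos hBpos.ne' hCε.ne).ne'
        have hβtop : β ≠ ∞ := (ENNReal.div_lt_top hfin hCz).ne
        set βr : ℝ := β.toReal with hβr
        have hβrpos : 0 < βr := ENNReal.toReal_pos hβ0 hβtop
        set x : ℝ := min ε (min 1 (βr / 2)) with hx
        have hx0 : 0 < x := lt_min hε (lt_min one_pos (by linarith))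
        have hxε : x ≤ ε := min_le_left _ _
        have hx1 : x ≤ 1 := le_trans (min_le_right _ _) (min_le_left _ _)
        have hxβ : x ≤ βr / 2 := le_trans (min_le_right _ _) (min_le_right _ _)
        refine ⟨x, t₂, hx0, ht₂pos, ?_⟩
        have hxn : x ^ n < βr :=
          lt_of_le_of_lt (le_trans (pow_le_of_le_one hx0.le hx1 (by omega)) hxβ)
            (by linarith)
        have hkey : ENNReal.ofReal (x ^ n) * Cε < modulusB n A t₂ := by
          have h1 : ENNReal.ofReal (x ^ n) < β := by
            calc ENNReal.ofReal (x ^ n) < ENNReal.ofReal βr :=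
                  (ENNReal.ofReal_lt_ofReal_iff hβrpos).2 hxn
              _ = β := ENNReal.ofReal_toReal hβtop
          calc ENNReal.ofReal (x ^ n) * Cε < β * Cε :=
                (ENNReal.mul_lt_mul_iff_left hCz hCε.ne).2 h1
            _ = modulusB n A t₂ := by rw [hβ]; exact ENNReal.div_mul_cancel hCz hCε.ne
        exact ((lt_of_le_of_lt (hsmall x hx0 hxε) hkey)).ne
end
end

section
/- Let n ≥ 3 and let A be a finite-valued Young function such that, for some ε > 0, the function t ↦ A(t)/t^{n−1+ε} is increasing, and such that ∫^∞ A(t)/t^{n+1} dt = ∞. Then ∫^∞ (t/A(t))^{1/(n−2)} dt < ∞ (so A_{n−1} is defined) and ∫^∞ A_{n−1}(t)/t^{n+1} dt = ∞. -/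
open MeasureTheory Metric Set Filter ENNReal
open scoped Topology NNReal

noncomputable section

/-! ### Auxiliary lemmas -/

lemma lint_rpow_Ioi {a e : ℝ} (ha : 0 < a) (he : e < -1) :
    ∫⁻ t in Ioi a, ENNReal.ofReal (t ^ e) = ENNReal.ofReal (a ^ (e + 1) / (-(e + 1))) := by
  rw [← MeasureTheory.ofReal_integral_eq_lintegral_ofReal
      (integrableOn_Ioi_rpow_of_lt he ha)
      ((ae_restrict_iff' measurableSet_Ioi).2 (Filter.Eventually.of_forall
        fun t ht => Real.rpow_nonneg (ha.trans ht).le e))]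
  rw [integral_Ioi_rpow_of_lt he ha]
  congr 1
  rw [div_neg, neg_div]

lemma scale_lemma {A : ℝ → ℝ≥0∞} {q : ℝ} (h0 : A 0 = 0) (hAfin : ∀ t, A t ≠ ∞)
    (hmono : MonotoneOn (fun t : ℝ => (A t).toReal / t ^ q) (Ioi (0:ℝ))) :
    ∀ u lam : ℝ, 0 ≤ u → 1 ≤ lam → ENNReal.ofReal (lam ^ q) * A u ≤ A (lam * u) := by
  intro u lam hu hlam
  rcases hu.eq_or_lt with h | hu
  · simp [← h, h0]
  · have hl0 : (0:ℝ) < lam := lt_of_lt_of_le one_pos hlam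
    have hlu : 0 < lam * u := mul_pos hl0 hu
    have h1 : (A u).toReal / u ^ q ≤ (A (lam * u)).toReal / (lam * u) ^ q :=
      hmono (mem_Ioi.2 hu) (mem_Ioi.2 hlu) (le_mul_of_one_le_left hu.le hlam)
    have h2 : lam ^ q * (A u).toReal ≤ (A (lam * u)).toReal := by
      rw [div_le_div_iff₀ (Real.rpow_pos_of_pos hu q) (Real.rpow_pos_of_pos hlu q),
        Real.mul_rpow hl0.le hu.le] at h1
      have huq : (0:ℝ) < u ^ q := Real.rpow_pos_of_pos hu q
      calc lam ^ q * (A u).toReal = (A u).toReal * (lam ^ q * u ^ q) / u ^ q := by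
            field_simp
        _ ≤ (A (lam * u)).toReal * u ^ q / u ^ q := by gcongr
        _ = (A (lam * u)).toReal := by field_simp
    calc ENNReal.ofReal (lam ^ q) * A u
        = ENNReal.ofReal (lam ^ q * (A u).toReal) := by
          rw [ENNReal.ofReal_mul (Real.rpow_nonneg hl0.le q), ENNReal.ofReal_toReal (hAfin u)]
      _ ≤ A (lam * u) := by
          rw [← ENNReal.ofReal_toReal (hAfin (lam * u))]
          exact ENNReal.ofReal_le_ofReal h2

lemma myConjPow {A : ℝ → ℝ≥0∞} {q q' : ℝ} (hq : 1 < q) (hq' : q' = q / (q - 1))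
    (hscale : ∀ u lam : ℝ, 0 ≤ u → 1 ≤ lam → ENNReal.ofReal (lam ^ q) * A u ≤ A (lam * u)) :
    ∀ s r : ℝ, 0 < s → s ≤ r → youngConj A r ≤ ENNReal.ofReal ((r / s) ^ q') * youngConj A s := by
  intro s r hs hsr
  have hr : 0 < r := lt_of_lt_of_le hs hsr
  have hρ : 1 ≤ r / s := (one_le_div hs).2 hsr
  have hρ0 : 0 < r / s := div_pos hr hs
  set lam : ℝ := (r / s) ^ (1 / (q - 1)) with hlam
  have hlam1 : 1 ≤ lam := Real.one_le_rpow hρ (one_div_nonneg.2 (by linarith))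
  have hlam0 : 0 < lam := lt_of_lt_of_le one_pos hlam1
  have hlamq : lam ^ q = (r / s) ^ q' := by
    rw [hlam, ← Real.rpow_mul hρ0.le]
    congr 1
    rw [hq']; ring
  rw [youngConj]
  refine iSup_le ?_
  rintro ⟨t, ht⟩
  simp only
  have ht' : (0:ℝ) ≤ t := ht
  have hu : 0 ≤ t / lam := div_nonneg ht' hlam0.le
  have hAt : ENNReal.ofReal ((r / s) ^ q') * A (t / lam) ≤ A t := by
    have := hscale (t / lam) lam hu hlam1
    rw [mul_div_cancel₀ t hlam0.ne', hlamq] at this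
    exact this
  have hid : t * r = (r / s) ^ q' * (t / lam * s) := by
    have h1 : (r / s) ^ q' = (r / s) * lam := by
      have hq'' : q' = 1 + 1 / (q - 1) := by
        have hne : q - 1 ≠ 0 := by linarith
        rw [hq']; field_simp; ring
      rw [hq'', Real.rpow_add hρ0, Real.rpow_one, hlam]
    rw [h1]
    field_simp
  have key : ENNReal.ofReal (t * r) - A t ≤
      ENNReal.ofReal ((r / s) ^ q') * (ENNReal.ofReal (t / lam * s) - A (t / lam)) := by
    rw [tsub_le_iff_right]
    calc ENNReal.ofReal (t * r)
        = ENNReal.ofReal ((r / s) ^ q') * ENNReal.ofReal (t / lam * s) := by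
          rw [← ENNReal.ofReal_mul (Real.rpow_nonneg hρ0.le q'), ← hid]
      _ ≤ ENNReal.ofReal ((r / s) ^ q') *
            ((ENNReal.ofReal (t / lam * s) - A (t / lam)) + A (t / lam)) := by
          gcongr
          exact le_tsub_add
      _ = ENNReal.ofReal ((r / s) ^ q') * (ENNReal.ofReal (t / lam * s) - A (t / lam)) +
            ENNReal.ofReal ((r / s) ^ q') * A (t / lam) := mul_add _ _ _
      _ ≤ _ := by gcongr
  refine key.trans ?_
  gcongr
  rw [youngConj]
  exact le_iSup_of_le ⟨t / lam, hu⟩ le_rfl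

lemma conjA_le {A : ℝ → ℝ≥0∞} (hA : IsYoung A) (hAfin : ∀ t, A t ≠ ∞) :
    ∀ t' : ℝ, 0 < t' → youngConj A ((A t').toReal / t') ≤ A t' := by
  intro t' ht'
  rw [youngConj]
  refine iSup_le ?_
  rintro ⟨s, hs⟩
  simp only
  have hs' : (0:ℝ) ≤ s := hs
  rw [tsub_le_iff_right]
  rcases le_or_gt s t' with h | h
  · calc ENNReal.ofReal (s * ((A t').toReal / t'))
        ≤ ENNReal.ofReal ((A t').toReal) := by
          apply ENNReal.ofReal_le_ofReal
          rw [mul_div_assoc']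
          rw [div_le_iff₀ ht']
          have : (0:ℝ) ≤ (A t').toReal := ENNReal.toReal_nonneg
          nlinarith
      _ = A t' := ENNReal.ofReal_toReal (hAfin t')
      _ ≤ A t' + A s := le_self_add
  · have hs0 : (0:ℝ) < s := ht'.trans h
    have hl0 : (0:ℝ) ≤ t' / s := by positivity
    have hl1 : t' / s ≤ 1 := by rw [div_le_one hs0]; exact h.le
    have hconv := hA.2.1 hs' (le_refl (0:ℝ)) hl0 hl1
    rw [mul_zero, add_zero, div_mul_cancel₀ t' hs0.ne', hA.1, mul_zero, add_zero] at hconv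
    -- hconv : A t' ≤ ENNReal.ofReal (t' / s) * A s
    calc ENNReal.ofReal (s * ((A t').toReal / t'))
        = ENNReal.ofReal (s / t') * A t' := by
          rw [← ENNReal.ofReal_toReal (hAfin t'), ← ENNReal.ofReal_mul (by positivity)]
          congr 1
          field_simp
          exact ENNReal.toReal_ofReal ENNReal.toReal_nonneg
      _ ≤ ENNReal.ofReal (s / t') * (ENNReal.ofReal (t' / s) * A s) := by gcongr
      _ = ENNReal.ofReal (s / t' * (t' / s)) * A s := by
          rw [ENNReal.ofReal_mul (by positivity), mul_assoc]
      _ = A s := by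
          rw [div_mul_div_comm, mul_comm s t', div_self (by positivity), ENNReal.ofReal_one,
            one_mul]
      _ ≤ A t' + A s := le_add_self

lemma B_le {A : ℝ → ℝ≥0∞} {p q' : ℝ} (hq'0 : 0 < q') (hq'p : q' < p)
    (hconj : ∀ s r : ℝ, 0 < s → s ≤ r →
      youngConj A r ≤ ENNReal.ofReal ((r / s) ^ q') * youngConj A s) :
    ∀ s : ℝ, 0 < s → youngConj A s ≠ ∞ →
      ENNReal.ofReal (s ^ p) * ∫⁻ r in Ioi s, youngConj A r / ENNReal.ofReal (r ^ (1 + p)) ≤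
        ENNReal.ofReal (1 / (p - q')) * youngConj A s := by
  intro s hs hfin
  have hcst : youngConj A s * ENNReal.ofReal (s ^ (-q')) ≠ ∞ :=
    ENNReal.mul_ne_top hfin ofReal_ne_top
  have hpoint : ∀ r : ℝ, r ∈ Ioi s →
      youngConj A r / ENNReal.ofReal (r ^ (1 + p)) ≤
        youngConj A s * ENNReal.ofReal (s ^ (-q')) * ENNReal.ofReal (r ^ (q' - 1 - p)) := by
    intro r hr
    have hr0 : 0 < r := hs.trans hr
    have hsplit : ENNReal.ofReal ((r / s) ^ q') =
        ENNReal.ofReal (s ^ (-q')) * ENNReal.ofReal (r ^ (q' - 1 - p)) *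
          ENNReal.ofReal (r ^ (1 + p)) := by
      rw [← ENNReal.ofReal_mul (by positivity), ← ENNReal.ofReal_mul (by positivity)]
      congr 1
      rw [mul_assoc, ← Real.rpow_add hr0, show q' - 1 - p + (1 + p) = q' by ring,
        Real.div_rpow hr0.le hs.le, Real.rpow_neg hs.le, div_eq_mul_inv, mul_comm]
    calc youngConj A r / ENNReal.ofReal (r ^ (1 + p))
        ≤ ENNReal.ofReal ((r / s) ^ q') * youngConj A s / ENNReal.ofReal (r ^ (1 + p)) := by
          gcongr
          exact hconj s r hs (le_of_lt hr)
      _ = youngConj A s * ENNReal.ofReal (s ^ (-q')) * ENNReal.ofReal (r ^ (q' - 1 - p)) *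
            (ENNReal.ofReal (r ^ (1 + p)) * (ENNReal.ofReal (r ^ (1 + p)))⁻¹) := by
          rw [hsplit, div_eq_mul_inv]; ring
      _ ≤ youngConj A s * ENNReal.ofReal (s ^ (-q')) * ENNReal.ofReal (r ^ (q' - 1 - p)) := by
          rw [ENNReal.mul_inv_cancel
            (ENNReal.ofReal_pos.2 (Real.rpow_pos_of_pos hr0 _)).ne' ofReal_ne_top, mul_one]
  have hint : ∫⁻ r in Ioi s, youngConj A r / ENNReal.ofReal (r ^ (1 + p)) ≤
      youngConj A s * ENNReal.ofReal (s ^ (-q')) * ENNReal.ofReal (s ^ (q' - p) / (p - q')) := by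
    calc ∫⁻ r in Ioi s, youngConj A r / ENNReal.ofReal (r ^ (1 + p))
        ≤ ∫⁻ r in Ioi s, youngConj A s * ENNReal.ofReal (s ^ (-q')) *
            ENNReal.ofReal (r ^ (q' - 1 - p)) := by
          refine lintegral_mono_ae ?_
          rw [ae_restrict_iff' measurableSet_Ioi]
          exact Filter.Eventually.of_forall hpoint
      _ = youngConj A s * ENNReal.ofReal (s ^ (-q')) *
            ∫⁻ r in Ioi s, ENNReal.ofReal (r ^ (q' - 1 - p)) := lintegral_const_mul' _ _ hcst
      _ = youngConj A s * ENNReal.ofReal (s ^ (-q')) * ENNReal.ofReal (s ^ (q' - p) / (p - q')) := by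
          rw [lint_rpow_Ioi hs (by linarith), show q' - 1 - p + 1 = q' - p by ring,
            show -(q' - p) = p - q' by ring]
  calc ENNReal.ofReal (s ^ p) * ∫⁻ r in Ioi s, youngConj A r / ENNReal.ofReal (r ^ (1 + p))
      ≤ ENNReal.ofReal (s ^ p) * (youngConj A s * ENNReal.ofReal (s ^ (-q')) *
          ENNReal.ofReal (s ^ (q' - p) / (p - q'))) := by gcongr
    _ = ENNReal.ofReal (s ^ p) * ENNReal.ofReal (s ^ (-q')) *
          ENNReal.ofReal (s ^ (q' - p) / (p - q')) * youngConj A s := by ring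
    _ = ENNReal.ofReal (1 / (p - q')) * youngConj A s := by
        congr 1
        rw [← ENNReal.ofReal_mul (by positivity), ← ENNReal.ofReal_mul (by positivity)]
        congr 1
        have h2 : s ^ p * s ^ (-q') * s ^ (q' - p) = 1 := by
          rw [← Real.rpow_add hs, ← Real.rpow_add hs, show p + -q' + (q' - p) = 0 by ring,
            Real.rpow_zero]
        calc s ^ p * s ^ (-q') * (s ^ (q' - p) / (p - q'))
            = s ^ p * s ^ (-q') * s ^ (q' - p) / (p - q') := by ring
          _ = 1 / (p - q') := by rw [h2]

lemma subst_lemma (g : ℝ → ℝ≥0∞) {k c : ℝ} (hk : 0 < k) :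
    ∫⁻ t in Ioi c, g (k⁻¹ * t) = ENNReal.ofReal k * ∫⁻ u in Ioi (c / k), g u := by
  have hki : (k⁻¹ : ℝ) ≠ 0 := inv_ne_zero hk.ne'
  set e : ℝ ≃ᵐ ℝ := MeasurableEquiv.mulLeft₀ k⁻¹ hki with he
  have hcoe : ⇑e = fun t : ℝ => k⁻¹ * t := by
    funext t
    simp [he, MeasurableEquiv.mulLeft₀, smul_eq_mul]
  have hmap : Measure.map (fun t : ℝ => k⁻¹ * t) (volume.restrict (Ioi c)) =
      ENNReal.ofReal k • volume.restrict (Ioi (c / k)) := by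
    have hpre : (fun t : ℝ => k⁻¹ * t) ⁻¹' (Ioi (c / k)) = Ioi c := by
      rw [preimage_const_mul_Ioi₀ _ (inv_pos.2 hk)]
      congr 1
      field_simp
    rw [← hpre, ← Measure.restrict_map (measurable_const_mul _) measurableSet_Ioi]
    rw [show ((fun t : ℝ => k⁻¹ * t)) = (k⁻¹ * ·) from rfl, Real.map_volume_mul_left hki,
      inv_inv, abs_of_pos hk, Measure.restrict_smul]
  calc ∫⁻ t in Ioi c, g (k⁻¹ * t)
      = ∫⁻ u, g u ∂(Measure.map e (volume.restrict (Ioi c))) := by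
        rw [lintegral_map_equiv g e, hcoe]
    _ = ENNReal.ofReal k * ∫⁻ u in Ioi (c / k), g u := by
        rw [hcoe, hmap, lintegral_smul_measure, smul_eq_mul]

theorem youngShifted_divergence_of_incr {n : ℕ} (hn : 3 ≤ n)
    (A : ℝ → ℝ≥0∞) (hA : IsYoung A) (hAfin : ∀ t : ℝ, A t ≠ ∞)
    (hincr : ∃ ε : ℝ, 0 < ε ∧
      MonotoneOn (fun t : ℝ => (A t).toReal / t ^ ((n : ℝ) - 1 + ε)) (Ioi (0 : ℝ)))
    (hdiv : ∀ c : ℝ, 0 < c → ∫⁻ t in Ioi c, A t / ENNReal.ofReal (t ^ (n + 1)) = ∞) :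
    TailCondition n A ∧
      ∀ c : ℝ, 0 < c →
        ∫⁻ t in Ioi c, youngShifted n A t / ENNReal.ofReal (t ^ (n + 1)) = ∞ := by
  obtain ⟨ε, hε, hmono'⟩ := hincr
  have hn3 : (3:ℝ) ≤ (n:ℝ) := by exact_mod_cast hn
  have hn2 : (0:ℝ) < (n:ℝ) - 2 := by linarith
  set q : ℝ := (n:ℝ) - 1 + ε with hqdef
  have hq1 : 1 < q := by rw [hqdef]; linarith
  have hmono : MonotoneOn (fun t : ℝ => (A t).toReal / t ^ q) (Ioi (0:ℝ)) := hmono'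
  obtain ⟨x, y, hx, hy, hxy⟩ := hA.2.2
  obtain ⟨t₁, ht₁, hAt₁⟩ : ∃ t₁ : ℝ, 0 < t₁ ∧ A t₁ ≠ 0 := by
    by_cases h : A x = 0
    · exact ⟨y, hy, fun h0 => hxy (h.trans h0.symm)⟩
    · exact ⟨x, hx, h⟩
  have hAt₁pos : 0 < (A t₁).toReal := ENNReal.toReal_pos hAt₁ (hAfin t₁)
  have hAne : ∀ t : ℝ, t₁ ≤ t → 0 < (A t).toReal := by
    intro t ht
    have h1 := hmono (mem_Ioi.2 ht₁) (mem_Ioi.2 (lt_of_lt_of_le ht₁ ht)) ht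
    have h2 : 0 < (A t₁).toReal / t₁ ^ q := div_pos hAt₁pos (Real.rpow_pos_of_pos ht₁ q)
    have h3 : 0 < (A t).toReal / t ^ q := lt_of_lt_of_le h2 h1
    have h4 : (0:ℝ) < t ^ q := Real.rpow_pos_of_pos (lt_of_lt_of_le ht₁ ht) q
    have h5 := mul_pos h3 h4
    rwa [div_mul_cancel₀ _ h4.ne'] at h5
  constructor
  · -- Tail condition
    set κ : ℝ := (A t₁).toReal / t₁ ^ q with hκ
    have hκpos : 0 < κ := div_pos hAt₁pos (Real.rpow_pos_of_pos ht₁ q)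
    refine ⟨t₁, ht₁, ?_⟩
    set e₀ : ℝ := (1 - q) / ((n:ℝ) - 2) with he₀
    have he₀lt : e₀ < -1 := by
      rw [he₀, div_lt_iff₀ hn2, hqdef]
      nlinarith
    have hpt : ∀ t : ℝ, t ∈ Ioi t₁ →
        (ENNReal.ofReal t / A t) ^ (1 / ((n : ℝ) - 2)) ≤
          ENNReal.ofReal ((1/κ) ^ (1/((n:ℝ)-2))) * ENNReal.ofReal (t ^ e₀) := by
      intro t ht
      have ht0 : 0 < t := ht₁.trans ht
      have hlow : ENNReal.ofReal (κ * t ^ q) ≤ A t := by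
        have h1 := hmono (mem_Ioi.2 ht₁) (mem_Ioi.2 ht0) (le_of_lt ht)
        have h2 : κ * t ^ q ≤ (A t).toReal :=
          (le_div_iff₀ (Real.rpow_pos_of_pos ht0 q)).1 h1
        calc ENNReal.ofReal (κ * t ^ q) ≤ ENNReal.ofReal ((A t).toReal) :=
              ENNReal.ofReal_le_ofReal h2
          _ = A t := ENNReal.ofReal_toReal (hAfin t)
      have hdivle : ENNReal.ofReal t / A t ≤ ENNReal.ofReal (t / (κ * t ^ q)) := by
        rw [ENNReal.ofReal_div_of_pos (by positivity)]
        exact ENNReal.div_le_div le_rfl hlow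
      calc (ENNReal.ofReal t / A t) ^ (1/((n:ℝ)-2))
          ≤ (ENNReal.ofReal (t / (κ * t ^ q))) ^ (1/((n:ℝ)-2)) :=
            ENNReal.rpow_le_rpow hdivle (one_div_nonneg.2 hn2.le)
        _ = ENNReal.ofReal ((t / (κ * t ^ q)) ^ (1/((n:ℝ)-2))) :=
            ENNReal.ofReal_rpow_of_pos (by positivity)
        _ = ENNReal.ofReal ((1/κ) ^ (1/((n:ℝ)-2))) * ENNReal.ofReal (t ^ e₀) := by
            rw [← ENNReal.ofReal_mul (by positivity)]
            congr 1
            have h3 : t / (κ * t ^ q) = (1/κ) * t ^ (1 - q) := by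
              rw [Real.rpow_sub ht0, Real.rpow_one]
              field_simp
            rw [h3, Real.mul_rpow (by positivity) (Real.rpow_nonneg ht0.le _),
              ← Real.rpow_mul ht0.le, he₀]
            congr 1
            ring
    calc ∫⁻ t in Ioi t₁, (ENNReal.ofReal t / A t) ^ (1/((n:ℝ)-2))
        ≤ ∫⁻ t in Ioi t₁, ENNReal.ofReal ((1/κ)^(1/((n:ℝ)-2))) * ENNReal.ofReal (t ^ e₀) := by
          refine lintegral_mono_ae ?_
          rw [ae_restrict_iff' measurableSet_Ioi]
          exact Filter.Eventually.of_forall hpt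
      _ = ENNReal.ofReal ((1/κ)^(1/((n:ℝ)-2))) * ENNReal.ofReal (t₁ ^ (e₀+1)/(-(e₀+1))) := by
          rw [lintegral_const_mul' _ _ ofReal_ne_top, lint_rpow_Ioi ht₁ he₀lt]
      _ < ∞ := ENNReal.mul_lt_top ENNReal.ofReal_lt_top ENNReal.ofReal_lt_top
  · -- divergence of the shifted function
    intro c hc
    have hp : youngExp n = ((n:ℝ)-1)/((n:ℝ)-2) := rfl
    set q' : ℝ := q / (q - 1) with hq'def
    have hq'0 : 0 < q' := div_pos (by linarith) (by linarith)
    have hq'p : q' < youngExp n := by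
      rw [hq'def, hp, div_lt_div_iff₀ (by linarith) hn2, hqdef]
      nlinarith
    have hscale := scale_lemma hA.1 hAfin hmono
    have hconj := myConjPow hq1 hq'def hscale
    set C : ℝ := 1 / (youngExp n - q') with hCdef
    have hCpos : 0 < C := one_div_pos.2 (sub_pos.2 hq'p)
    set k : ℝ := 2 * C with hkdef
    have hk : 0 < k := by rw [hkdef]; linarith
    set c' : ℝ := max c (k * t₁) with hc'def
    have hc'c : c ≤ c' := le_max_left _ _
    have hc'pos : 0 < c' := lt_of_lt_of_le hc hc'c
    have hn2' : n ≠ 2 := by omega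
    have hkey : ∀ t : ℝ, t ∈ Ioi c' → ENNReal.ofReal C * A (k⁻¹ * t) ≤ youngShifted n A t := by
      intro t ht
      have htc : c' < t := ht
      have htk : k * t₁ < t := lt_of_le_of_lt (le_max_right c (k*t₁)) htc
      have ht1u : t₁ < k⁻¹ * t := by
        rw [inv_mul_eq_div, lt_div_iff₀ hk]
        linarith [htk]
      set u : ℝ := k⁻¹ * t with hu
      have hu0 : 0 < u := lt_trans ht₁ ht1u
      have hAu : 0 < (A u).toReal := hAne u ht1u.le
      set s₀ : ℝ := (A u).toReal / u with hs₀def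
      have hs₀ : 0 < s₀ := div_pos hAu hu0
      have hconjle : youngConj A s₀ ≤ A u := conjA_le hA hAfin u hu0
      have hconjfin : youngConj A s₀ ≠ ∞ := by
        intro h
        exact (hAfin u) (top_le_iff.1 (h ▸ hconjle))
      have hB : ENNReal.ofReal (s₀ ^ youngExp n) *
          (∫⁻ r in Ioi s₀, youngConj A r / ENNReal.ofReal (r ^ (1 + youngExp n))) ≤
            ENNReal.ofReal C * A u := by
        refine (B_le hq'0 hq'p hconj s₀ hs₀ hconjfin).trans ?_
        rw [← hCdef]
        exact mul_le_mul_right hconjle _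
      have hsup : ENNReal.ofReal (s₀ * t) - (ENNReal.ofReal (s₀ ^ youngExp n) *
          ∫⁻ r in Ioi s₀, youngConj A r / ENNReal.ofReal (r ^ (1 + youngExp n)))
            ≤ youngShifted n A t := by
        rw [youngShifted, if_neg hn2', youngConj]
        exact le_iSup_of_le ⟨s₀, hs₀.le⟩ le_rfl
      refine le_trans ?_ hsup
      have hst : ENNReal.ofReal (s₀ * t) = ENNReal.ofReal k * A u := by
        rw [← ENNReal.ofReal_toReal (hAfin u), ← ENNReal.ofReal_mul hk.le]
        congr 1
        have hut : u * k = t := by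
          rw [hu, mul_comm k⁻¹ t, mul_assoc, inv_mul_cancel₀ hk.ne', mul_one]
        calc s₀ * t = (A u).toReal / u * (u * k) := by rw [hut]
          _ = k * (A u).toReal := by
              rw [div_mul_eq_mul_div, mul_comm u k, ← mul_assoc, mul_div_assoc,
                div_self hu0.ne', mul_one, mul_comm]
      calc ENNReal.ofReal C * A u
          ≤ ENNReal.ofReal k * A u - ENNReal.ofReal C * A u := by
            refine (ENNReal.cancel_of_ne (ENNReal.mul_ne_top ENNReal.ofReal_ne_top
              (hAfin u))).le_tsub_of_add_le_left ?_
            rw [← add_mul, ← ENNReal.ofReal_add hCpos.le hCpos.le,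
              show C + C = k by rw [hkdef]; ring]
        _ ≤ _ := by
            rw [hst]
            exact tsub_le_tsub le_rfl hB
    have h1 : ∫⁻ t in Ioi c', ENNReal.ofReal C * (A (k⁻¹ * t) / ENNReal.ofReal (t ^ (n+1))) ≤
        ∫⁻ t in Ioi c, youngShifted n A t / ENNReal.ofReal (t ^ (n+1)) := by
      refine le_trans (lintegral_mono_ae ?_) (lintegral_mono_set (Ioi_subset_Ioi hc'c))
      rw [ae_restrict_iff' measurableSet_Ioi]
      refine Filter.Eventually.of_forall fun t ht => ?_
      calc ENNReal.ofReal C * (A (k⁻¹*t) / ENNReal.ofReal (t^(n+1)))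
          = (ENNReal.ofReal C * A (k⁻¹*t)) / ENNReal.ofReal (t^(n+1)) :=
            (mul_div_assoc _ _ _).symm
        _ ≤ _ := ENNReal.div_le_div (hkey t ht) le_rfl
    have h2 : ∫⁻ t in Ioi c', ENNReal.ofReal C * (A (k⁻¹ * t) / ENNReal.ofReal (t ^ (n+1))) = ∞ := by
      rw [lintegral_const_mul' _ _ ofReal_ne_top]
      set g : ℝ → ℝ≥0∞ := fun u => A u / ENNReal.ofReal ((k * u) ^ (n+1)) with hg
      have hgt : ∀ t : ℝ, A (k⁻¹ * t) / ENNReal.ofReal (t ^ (n+1)) = g (k⁻¹ * t) := by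
        intro t
        have hkt : k * (k⁻¹ * t) = t := by
          rw [← mul_assoc, mul_inv_cancel₀ hk.ne', one_mul]
        simp only [hg]
        rw [hkt]
      have hsub : ∫⁻ t in Ioi c', A (k⁻¹ * t) / ENNReal.ofReal (t ^ (n+1)) =
          ENNReal.ofReal k * ∫⁻ u in Ioi (c' / k), g u := by
        rw [← subst_lemma g hk]
        exact lintegral_congr fun t => hgt t
      rw [hsub]
      have hck : 0 < c' / k := div_pos hc'pos hk
      have h3 : ∫⁻ u in Ioi (c' / k), g u = ∞ := by
        have hcong : ∫⁻ u in Ioi (c'/k), g u =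
            ∫⁻ u in Ioi (c'/k), (A u / ENNReal.ofReal (u ^ (n+1))) *
              (ENNReal.ofReal ((k:ℝ) ^ (n+1)))⁻¹ := by
          refine setLIntegral_congr_fun measurableSet_Ioi
            (fun u hu => ?_)
          have hu0 : 0 < u := hck.trans hu
          simp only [hg]
          rw [mul_pow, ENNReal.ofReal_mul (by positivity), div_eq_mul_inv, div_eq_mul_inv,
            ENNReal.mul_inv (Or.inl (ENNReal.ofReal_pos.2 (by positivity)).ne')
              (Or.inl ofReal_ne_top)]
          ring
        rw [hcong, lintegral_mul_const' _ _ (ENNReal.inv_ne_top.2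
            (ENNReal.ofReal_pos.2 (by positivity)).ne'), hdiv (c'/k) hck,
          ENNReal.top_mul (ENNReal.inv_ne_zero.2 ofReal_ne_top)]
      rw [h3, ENNReal.mul_top (ENNReal.ofReal_pos.2 hk).ne',
        ENNReal.mul_top (ENNReal.ofReal_pos.2 hCpos).ne']
    exact top_le_iff.1 (h2 ▸ h1)
end
end
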